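/- arXiv:1710.09930 — 15 statements merged into one kernel-verified Lean document; each statement's English description precedes it below -/
import Mathlib

section
/- Let X be a set and V : X → Filter X a vicinity map. Then each filter V x is countably generated if and only if there exists a protometric d on X such that for every x ∈ X the filter V x equals the ball filter of d at x. -/
open Filter Topology

/-- A vicinity map `V` on a set `X` has all its filters countably generated iff
there is a protometric `d` (nonnegative, vanishing on the diagonal) whose ball
filters are exactly the filters `V x`. -/
theorem stmt1 {X : Type*} (V : X → Filter X) (hV : ∀ x, pure x ≤ V x) :
    (∀ x, (V x).IsCountablyGenerated) ↔
      ∃ d : X → X → ℝ, (∀ x y, 0 ≤ d x y) ∧ (∀ x, d x x = 0) ∧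
        ∀ x, V x = ⨅ (ε : ℝ) (_ : 0 < ε), Filter.principal {y | d x y < ε} := by
  classical
  constructor
  · intro h
    have hs : ∀ x, ∃ s : ℕ → Set X, (V x).HasAntitoneBasis s :=
      fun x => haveI := h x; (V x).exists_antitone_basis
    choose s hbs using hs
    have hmem : ∀ x n, s x n ∈ V x := fun x n => (hbs x).toHasBasis.mem_of_mem trivial
    have hxs : ∀ x n, x ∈ s x n := fun x n => hV x (hmem x n)
    set d : X → X → ℝ := fun x y =>
      if h : ∀ n, y ∈ s x n then 0 else (1/2 : ℝ) ^ (Nat.find (not_forall.mp h)) with hd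
    have hnn : ∀ x y, 0 ≤ d x y := by
      intro x y
      simp only [hd]
      split
      · exact le_refl 0
      · positivity
    -- if y ∈ s x n then d x y < ε whenever (1/2)^n < ε
    have key1 : ∀ x y n (ε : ℝ), (1/2 : ℝ) ^ n < ε → y ∈ s x n → d x y < ε := by
      intro x y n ε hε hy
      simp only [hd]
      split
      · exact lt_of_le_of_lt (by positivity) hε
      · rename_i hnot
        set N := Nat.find (not_forall.mp hnot) with hN
        have hNspec : y ∉ s x N := Nat.find_spec (not_forall.mp hnot)
        have hnN : n < N := by
          by_contra hc
          push_neg at hc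
          exact hNspec ((hbs x).antitone hc hy)
        calc (1/2 : ℝ) ^ N < (1/2 : ℝ) ^ n := by
              apply pow_lt_pow_right_of_lt_one₀ (by norm_num) (by norm_num) hnN
          _ < ε := hε
    -- if d x y < (1/2)^n then y ∈ s x n
    have key2 : ∀ x y n, d x y < (1/2 : ℝ) ^ n → y ∈ s x n := by
      intro x y n hlt
      simp only [hd] at hlt
      split at hlt
      · rename_i hall; exact hall n
      · rename_i hnot
        have hnN : n < Nat.find (not_forall.mp hnot) := by
          have := (pow_lt_pow_iff_right_of_lt_one₀ (by norm_num : (0:ℝ) < 1/2)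
            (by norm_num : (1/2 : ℝ) < 1)).mp hlt
          exact this
        exact not_not.mp (Nat.find_min (not_forall.mp hnot) hnN)
    refine ⟨d, hnn, ?_, ?_⟩
    · intro x
      simp only [hd]
      rw [dif_pos (hxs x)]
    · intro x
      apply le_antisymm
      · refine le_iInf fun ε => le_iInf fun hε => ?_
        obtain ⟨n, hn⟩ := exists_pow_lt_of_lt_one hε (by norm_num : (1/2 : ℝ) < 1)
        exact le_principal_iff.mpr (mem_of_superset (hmem x n) (fun y hy => key1 x y n ε hn hy))
      · intro t ht
        obtain ⟨n, -, hsub⟩ := (hbs x).toHasBasis.mem_iff.mp ht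
        have hball : {y | d x y < (1/2:ℝ)^n} ∈
            ⨅ (ε : ℝ) (_ : 0 < ε), Filter.principal {y | d x y < ε} := by
          have : (⨅ (ε : ℝ) (_ : 0 < ε), Filter.principal {y | d x y < ε}) ≤
              Filter.principal {y | d x y < (1/2:ℝ)^n} :=
            iInf_le_of_le ((1/2:ℝ)^n) (iInf_le _ (by positivity))
          exact this (mem_principal_self _)
        exact mem_of_superset hball (fun y hy => hsub (key2 x y n hy))
  · rintro ⟨d, hnn, hdiag, hball⟩ x
    rw [hball x]
    have : (⨅ (ε : ℝ) (_ : 0 < ε), Filter.principal {y | d x y < ε}) =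
        ⨅ (n : ℕ), Filter.principal {y | d x y < 1/(n+1)} := by
      apply le_antisymm
      · refine le_iInf fun n => ?_
        exact iInf_le_of_le (1/(n+1)) (iInf_le _ (by positivity))
      · refine le_iInf fun ε => le_iInf fun hε => ?_
        obtain ⟨n, hn⟩ := exists_nat_one_div_lt hε
        refine le_trans (iInf_le _ n) (principal_mono.mpr ?_)
        intro y hy
        exact lt_trans hy hn
    rw [this]
    infer_instance
end

section
/- A topological space X is o-metrizable if and only if it is weakly first countable. -/
open Filter Topology

/-- A weak base for a topological space: a family of filter bases `B x` with
`x` in every member, such that a set is open iff it absorbs a member of `B x`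
at each of its points. -/
def IsWeakBase {X : Type*} [TopologicalSpace X] (B : X → Set (Set X)) : Prop :=
  (∀ x, (B x).Nonempty) ∧
  (∀ x, ∀ V₁ ∈ B x, ∀ V₂ ∈ B x, ∃ W ∈ B x, W ⊆ V₁ ∩ V₂) ∧
  (∀ x, ∀ V ∈ B x, x ∈ V) ∧
  (∀ U : Set X, IsOpen U ↔ ∀ x ∈ U, ∃ V ∈ B x, V ⊆ U)

/-- A topological space is weakly first countable if it has a weak base with
`B x` countable for every `x`. -/
def WeaklyFirstCountable (X : Type*) [TopologicalSpace X] : Prop :=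
  ∃ B : X → Set (Set X), IsWeakBase B ∧ ∀ x, (B x).Countable

/-- From a countable weak base, extract at each point a nested cofinal chain. -/
lemma exists_chain {X : Type*} [TopologicalSpace X] {B : X → Set (Set X)}
    (hB : IsWeakBase B) (hc : ∀ x, (B x).Countable) (x : X) :
    ∃ W : ℕ → Set X, (∀ n, W n ∈ B x) ∧ (∀ n m, n ≤ m → W m ⊆ W n) ∧
      (∀ V ∈ B x, ∃ n, W n ⊆ V) := by
  obtain ⟨h1, h2, _, _⟩ := hB
  obtain ⟨e, he⟩ := Set.Countable.exists_eq_range (hc x) (h1 x)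
  have hem : ∀ n, e n ∈ B x := fun n => he ▸ Set.mem_range_self n
  choose F hF hFsub using h2 x
  let g : ℕ → {V : Set X // V ∈ B x} := fun n =>
    Nat.rec ⟨e 0, hem 0⟩ (fun n p => ⟨F p.1 p.2 (e (n+1)) (hem (n+1)),
      hF p.1 p.2 (e (n+1)) (hem (n+1))⟩) n
  have step : ∀ n, (g (n+1)).1 ⊆ (g n).1 := fun n y hy =>
    (hFsub (g n).1 (g n).2 (e (n+1)) (hem (n+1)) hy).1
  refine ⟨fun n => (g n).1, fun n => (g n).2, ?_, ?_⟩
  · intro n m hnm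
    induction hnm with
    | refl => exact subset_rfl
    | step _ ih => exact (step _).trans ih
  · intro V hV
    rw [he] at hV
    obtain ⟨m, rfl⟩ := hV
    cases m with
    | zero => exact ⟨0, subset_rfl⟩
    | succ k => exact ⟨k+1, fun y hy =>
        (hFsub (g k).1 (g k).2 (e (k+1)) (hem (k+1)) hy).2⟩

/-- A topological space is o-metrizable (its open sets are exactly the sets
containing a protometric ball around each of their points) iff it is weakly
first countable. -/
theorem stmt2 {X : Type*} [TopologicalSpace X] :
    (∃ d : X → X → ℝ, (∀ x y, 0 ≤ d x y) ∧ (∀ x, d x x = 0) ∧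
      ∀ U : Set X, IsOpen U ↔ ∀ x ∈ U, ∃ ε > 0, {y | d x y < ε} ⊆ U) ↔
    WeaklyFirstCountable X := by
  constructor
  · rintro ⟨d, hd0, hdxx, hdopen⟩
    refine ⟨fun x => Set.range (fun n : ℕ => {y | d x y < 1/(n+1)}),
      ⟨fun x => ⟨_, 0, rfl⟩, ?_, ?_, ?_⟩, fun x => Set.countable_range _⟩
    · rintro x _ ⟨n, rfl⟩ _ ⟨m, rfl⟩
      refine ⟨_, ⟨max n m, rfl⟩, fun y hy => ?_⟩
      simp only [Set.mem_setOf_eq] at hy ⊢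
      constructor <;>
      · refine lt_of_lt_of_le hy (one_div_le_one_div_of_le (by positivity) ?_)
        push_cast
        gcongr
        first
        | exact le_sup_left
        | exact le_sup_right
    · rintro x _ ⟨n, rfl⟩
      simp only [Set.mem_setOf_eq, hdxx]
      positivity
    · intro U
      rw [hdopen U]
      constructor
      · intro h x hx
        obtain ⟨ε, hε, hball⟩ := h x hx
        obtain ⟨n, hn⟩ := exists_nat_one_div_lt hε
        exact ⟨_, ⟨n, rfl⟩, fun y hy => hball (lt_trans hy hn)⟩
      · rintro h x hx
        obtain ⟨_, ⟨n, rfl⟩, hsub⟩ := h x hx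
        exact ⟨1/(n+1), by positivity, hsub⟩
  · rintro ⟨B, hB, hc⟩
    classical
    obtain ⟨-, -, h3, h4⟩ := id hB
    choose W hW1 hW2 hW3 using fun x => exists_chain hB hc x
    set d : X → X → ℝ := fun x y =>
      if h : ∃ n, y ∉ W x n then 1/(Nat.find h + 1) else 0 with hd
    have hdnn : ∀ x y, 0 ≤ d x y := by
      intro x y; rw [hd]; dsimp only
      split <;> positivity
    have hball : ∀ x (k : ℕ), {y | d x y < 1/(k+1)} = W x k := by
      intro x k
      ext y
      simp only [Set.mem_setOf_eq, hd]
      by_cases h : ∃ n, y ∉ W x n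
      · rw [dif_pos h]
        constructor
        · intro hlt
          by_contra hy
          have hk : Nat.find h ≤ k := Nat.find_le hy
          have : (1:ℝ)/(k+1) ≤ 1/(Nat.find h + 1) := by
            apply one_div_le_one_div_of_le (by positivity)
            exact_mod_cast Nat.succ_le_succ hk
          linarith
        · intro hy
          have hk : k < Nat.find h := by
            by_contra hk
            push_neg at hk
            exact (Nat.find_spec h) (hW2 x _ _ hk hy)
          apply one_div_lt_one_div_of_lt (by positivity)
          exact_mod_cast Nat.succ_lt_succ hk
      · rw [dif_neg h]
        push_neg at h
        simp only [h k, iff_true]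
        positivity
    refine ⟨d, hdnn, ?_, ?_⟩
    · intro x
      rw [hd]
      dsimp only
      rw [dif_neg]
      push_neg
      exact fun n => h3 x _ (hW1 x n)
    · intro U
      rw [h4 U]
      constructor
      · intro h x hx
        obtain ⟨V, hV, hVU⟩ := h x hx
        obtain ⟨k, hk⟩ := hW3 x V hV
        refine ⟨1/(k+1), by positivity, ?_⟩
        rw [hball x k]
        exact hk.trans hVU
      · intro h x hx
        obtain ⟨ε, hε, hsub⟩ := h x hx
        obtain ⟨k, hk⟩ := exists_nat_one_div_lt hε
        refine ⟨W x k, hW1 x k, ?_⟩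
        rw [← hball x k]
        exact fun y hy => hsub (lt_trans hy hk)
end

section
/- Every weakly first countable topological space is sequential (i.e., every sequentially closed subset is closed). -/
open Filter Topology

/-- Every weakly first countable topological space is sequential. -/
theorem stmt3 {X : Type*} [TopologicalSpace X] (h : WeaklyFirstCountable X) :
    SequentialSpace X := by
  obtain ⟨B, ⟨hne, hdir, hmem, hopen⟩, hcnt⟩ := h
  constructor
  intro A hA
  rw [← isOpen_compl_iff, hopen]
  by_contra hc
  push_neg at hc
  obtain ⟨x, hxA, hx⟩ := hc
  -- every V ∈ B x meets A
  have hmeet : ∀ V ∈ B x, (V ∩ A).Nonempty := by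
    intro V hV
    rcases Set.not_subset.mp (hx V hV) with ⟨y, hyV, hyA⟩
    exact ⟨y, hyV, Set.not_notMem.mp hyA⟩
  obtain ⟨f, hf⟩ := ((hcnt x).exists_eq_range (hne x))
  have hfmem : ∀ n, f n ∈ B x := fun n => hf ▸ Set.mem_range_self n
  -- choose directed refinements
  choose! W hWmem hWsub using hdir x
  -- decreasing sequence
  let V : ℕ → Set X := fun n => Nat.rec (f 0) (fun n Vn => W Vn (f (n + 1))) n
  have hVmem : ∀ n, V n ∈ B x := by
    intro n
    induction n with
    | zero => exact hfmem 0
    | succ n ih => exact hWmem _ ih _ (hfmem (n + 1))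
  have hVstep : ∀ n, V (n + 1) ⊆ V n ∩ f (n + 1) := fun n =>
    hWsub _ (hVmem n) _ (hfmem (n + 1))
  have hVanti : ∀ {k n : ℕ}, k ≤ n → V n ⊆ V k := by
    intro k n hkn
    induction n with
    | zero => simpa [Nat.le_zero.mp hkn] using subset_rfl
    | succ n ih =>
      rcases Nat.lt_or_ge k (n + 1) with hk | hk
      · exact ((hVstep n).trans Set.inter_subset_left).trans (ih (Nat.lt_succ_iff.mp hk))
      · have : k = n + 1 := le_antisymm hkn hk
        simpa [this] using subset_rfl
  have hVf : ∀ {k n : ℕ}, k ≤ n → V n ⊆ f k := by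
    intro k n hkn
    cases k with
    | zero => exact hVanti (Nat.zero_le n)
    | succ k =>
      exact (hVanti hkn).trans ((hVstep k).trans Set.inter_subset_right)
  -- choose points of A in V n
  choose a haV haA using fun n => hmeet (V n) (hVmem n)
  have htend : Tendsto a atTop (𝓝 x) := by
    rw [tendsto_nhds]
    intro U hU hxU
    obtain ⟨V', hV', hV'U⟩ := (hopen U).mp hU x hxU
    obtain ⟨k, hk⟩ : ∃ k, f k = V' := by rw [hf] at hV'; exact hV'
    filter_upwards [eventually_ge_atTop k] with n hn
    exact hV'U (hk ▸ hVf hn (haV n))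
  exact hxA (hA haA htend)
end

section
/- Let X be a Hausdorff topological space and let V₁, V₂ : X → Filter X be vicinity maps such that for i = 1,2 and every x ∈ X, the filter Vᵢ x is countably generated, Vᵢ x is finer than the neighborhood filter 𝓝 x (every neighborhood of x belongs to Vᵢ x), and every set that is open in the topology induced by Vᵢ is open in X. Then V₁ = V₂. -/
open Filter Topology

/-- Key step: one-sided inclusion between two vicinity maps. -/
lemma stmt4_aux {X : Type*} [TopologicalSpace X] [T2Space X]
    (V₁ V₂ : X → Filter X)
    (hp₁ : ∀ x, pure x ≤ V₁ x)
    (hc₂ : ∀ x, (V₂ x).IsCountablyGenerated)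
    (hn₁ : ∀ x, V₁ x ≤ 𝓝 x) (hn₂ : ∀ x, V₂ x ≤ 𝓝 x)
    (ho₁ : ∀ U : Set X, (∀ x ∈ U, U ∈ V₁ x) → IsOpen U)
    (x : X) : V₂ x ≤ V₁ x := by
  intro A hA
  by_contra h
  have := hc₂ x
  obtain ⟨C, hC⟩ := (V₂ x).exists_antitone_basis
  -- pick y n ∈ C n \ A
  have hy : ∀ n, ∃ y, y ∈ C n ∧ y ∉ A := by
    intro n
    by_contra hcon
    push_neg at hcon
    exact h (mem_of_superset (hC.mem n) hcon)
  choose y hyC hyA using hy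
  -- y converges to x
  have hconv : Filter.Tendsto y atTop (𝓝 x) := by
    intro O hO
    have hO2 : O ∈ V₂ x := hn₂ x hO
    obtain ⟨n, -, hn⟩ := hC.toHasBasis.mem_iff.mp hO2
    rw [Filter.mem_map]
    refine mem_of_superset (Filter.mem_atTop n) ?_
    intro m hm
    exact hn (hC.antitone hm (hyC m))
  -- K is compact hence closed
  have hK : IsCompact (insert x (Set.range y)) := hconv.isCompact_insert_range
  have hKc : IsClosed (insert x (Set.range y)) := hK.isClosed
  -- x ∈ A
  have hxA : x ∈ A := hp₁ x hA
  set U : Set X := (Set.range y)ᶜ with hU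
  have hxU : x ∈ U := by
    intro hmem
    obtain ⟨n, hn⟩ := hmem
    exact hyA n (hn ▸ hxA)
  have hUopen : IsOpen U := by
    refine ho₁ U ?_
    intro z hz
    rcases eq_or_ne z x with rfl | hzx
    · refine mem_of_superset hA ?_
      intro a ha hmem
      obtain ⟨n, hn⟩ := hmem
      exact hyA n (hn ▸ ha)
    · have hzK : z ∉ insert x (Set.range y) := by
        intro hmem
        rcases hmem with h' | h'
        · exact hzx h'
        · exact hz h'
      have : (insert x (Set.range y))ᶜ ∈ 𝓝 z := hKc.isOpen_compl.mem_nhds hzK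
      refine hn₁ z (mem_of_superset this ?_)
      intro a ha hmem
      exact ha (Set.mem_insert_iff.mpr (Or.inr hmem))
  have : U ∈ 𝓝 x := hUopen.mem_nhds hxU
  have hev : ∀ᶠ n in atTop, y n ∈ U := hconv this
  obtain ⟨n, hn⟩ := hev.exists
  exact hn ⟨n, rfl⟩

/-- In a Hausdorff space, a vicinity map with countably generated filters, finer
than the neighborhood filters, and inducing a topology whose open sets are open
in `X`, is unique. -/
theorem stmt4 {X : Type*} [TopologicalSpace X] [T2Space X]
    (V₁ V₂ : X → Filter X)
    (hp₁ : ∀ x, pure x ≤ V₁ x) (hp₂ : ∀ x, pure x ≤ V₂ x)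
    (hc₁ : ∀ x, (V₁ x).IsCountablyGenerated) (hc₂ : ∀ x, (V₂ x).IsCountablyGenerated)
    (hn₁ : ∀ x, V₁ x ≤ 𝓝 x) (hn₂ : ∀ x, V₂ x ≤ 𝓝 x)
    (ho₁ : ∀ U : Set X, (∀ x ∈ U, U ∈ V₁ x) → IsOpen U)
    (ho₂ : ∀ U : Set X, (∀ x ∈ U, U ∈ V₂ x) → IsOpen U) :
    V₁ = V₂ := by
  funext x
  exact le_antisymm (stmt4_aux V₂ V₁ hp₂ hc₁ hn₂ hn₁ ho₂ x)
    (stmt4_aux V₁ V₂ hp₁ hc₂ hn₁ hn₂ ho₁ x)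
end

section
/- Every Hausdorff Fréchet–Urysohn weakly first countable topological space is first countable (every point has a countable neighborhood basis). -/
open Filter Topology

/-- In a Hausdorff Fréchet–Urysohn space, every member of a weak base at `x`
is a neighborhood of `x`. -/
lemma IsWeakBase.mem_nhds {X : Type*} [TopologicalSpace X] [T2Space X]
    [FrechetUrysohnSpace X] {B : X → Set (Set X)} (hB : IsWeakBase B)
    {x : X} {V : Set X} (hV : V ∈ B x) : V ∈ 𝓝 x := by
  obtain ⟨hne, hinter, hmem, hopen⟩ := hB
  by_contra hnot
  have hxcl : x ∈ closure Vᶜ := by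
    rw [closure_compl]
    exact fun h => hnot (mem_interior_iff_mem_nhds.mp h)
  obtain ⟨y, hyV, hy⟩ := mem_closure_iff_seq_limit.mp hxcl
  set F : Set X := Set.range y with hF
  have hxF : x ∉ F := by
    rintro ⟨j, rfl⟩
    exact hyV j (hmem _ _ hV)
  have hclosed : IsClosed (insert x F) := hy.isCompact_insert_range.isClosed
  -- every point outside F has a weak-base set disjoint from F
  have Hg : ∀ z, z ∉ F → ∃ W ∈ B z, W ∩ F = ∅ := by
    intro z hz
    rcases eq_or_ne z x with rfl | hzx
    · refine ⟨V, hV, ?_⟩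
      ext w; simp only [Set.mem_inter_iff, Set.mem_empty_iff_false, iff_false, not_and]
      rintro hwV ⟨j, rfl⟩; exact hyV j hwV
    · have hzo : z ∈ (insert x F)ᶜ := by
        simp only [Set.mem_compl_iff, Set.mem_insert_iff, not_or]
        exact ⟨hzx, hz⟩
      obtain ⟨W, hW, hWsub⟩ := (hopen _).mp hclosed.isOpen_compl z hzo
      refine ⟨W, hW, ?_⟩
      ext w; simp only [Set.mem_inter_iff, Set.mem_empty_iff_false, iff_false, not_and]
      intro hwW hwF
      exact hWsub hwW (Set.mem_insert_iff.mpr (Or.inr hwF))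
  classical
  set g : X → Set X := fun z => if h : z ∉ F then (Hg z h).choose else ∅ with hg
  have hg1 : ∀ z, z ∉ F → g z ∈ B z := by
    intro z hz; rw [hg]; simp only [hz, dif_pos, not_false_iff]
    exact (Hg z hz).choose_spec.1
  have hg2 : ∀ z, z ∉ F → g z ∩ F = ∅ := by
    intro z hz; rw [hg]; simp only [hz, dif_pos, not_false_iff]
    exact (Hg z hz).choose_spec.2
  -- recursive construction of the open set
  set S : ℕ → Set X := fun n => Nat.rec V (fun _ Sn => ⋃ z ∈ Sn, g z) n with hS
  have hS0 : S 0 = V := rfl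
  have hSsucc : ∀ n, S (n + 1) = ⋃ z ∈ S n, g z := fun n => rfl
  have hSF : ∀ n, ∀ z ∈ S n, z ∉ F := by
    intro n
    induction n with
    | zero =>
      intro z hz ⟨j, hj⟩
      exact hyV j (hj ▸ hz)
    | succ n ih =>
      intro z hz hzF
      rw [hSsucc] at hz
      obtain ⟨w, hw, hzw⟩ := Set.mem_iUnion₂.mp hz
      have := hg2 w (ih w hw)
      exact absurd (Set.mem_inter hzw hzF) (by rw [this]; exact id)
  set U : Set X := ⋃ n, S n with hU
  have hxU : x ∈ U := Set.mem_iUnion.mpr ⟨0, hmem _ _ hV⟩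
  have hUopen : IsOpen U := by
    rw [hopen]
    intro z hz
    obtain ⟨n, hn⟩ := Set.mem_iUnion.mp hz
    refine ⟨g z, hg1 z (hSF n z hn), ?_⟩
    intro w hw
    exact Set.mem_iUnion.mpr ⟨n + 1, by rw [hSsucc]; exact Set.mem_iUnion₂.mpr ⟨z, hn, hw⟩⟩
  have hev : ∀ᶠ j in atTop, y j ∈ U := hy (hUopen.mem_nhds hxU)
  obtain ⟨j, hj⟩ := hev.exists
  obtain ⟨n, hn⟩ := Set.mem_iUnion.mp hj
  exact hSF n (y j) hn ⟨j, rfl⟩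

/-- Every Hausdorff Fréchet–Urysohn weakly first countable space is first countable. -/
theorem stmt5 {X : Type*} [TopologicalSpace X] [T2Space X] [FrechetUrysohnSpace X]
    (h : WeaklyFirstCountable X) : FirstCountableTopology X := by
  classical
  obtain ⟨B, hB, hcount⟩ := h
  obtain ⟨hne, hinter, hmem, hopen⟩ := id hB
  refine ⟨fun x => ?_⟩
  -- enumerate the weak base at x
  obtain ⟨e, he⟩ := (hcount x).exists_eq_range (hne x)
  have heB : ∀ n, e n ∈ B x := fun n => by rw [he]; exact Set.mem_range_self n
  -- a decreasing sequence cofinal in the weak base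
  choose! W hW1 hW2 using hinter x
  set D : ℕ → Set X := fun n => Nat.rec (e 0) (fun n Dn => W Dn (e (n + 1))) n with hD
  have hD0 : D 0 = e 0 := rfl
  have hDsucc : ∀ n, D (n + 1) = W (D n) (e (n + 1)) := fun n => rfl
  have hDB : ∀ n, D n ∈ B x := by
    intro n
    induction n with
    | zero => exact heB 0
    | succ n ih => rw [hDsucc]; exact hW1 _ ih _ (heB (n + 1))
  have hDe : ∀ n, D n ⊆ e n := by
    intro n
    cases n with
    | zero => exact le_of_eq hD0
    | succ n =>
      rw [hDsucc]
      exact (hW2 _ (hDB n) _ (heB (n + 1))).trans Set.inter_subset_right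
  have hDanti : ∀ k n, k ≤ n → D n ⊆ D k := by
    intro k n hkn
    induction n with
    | zero => rw [Nat.le_zero.mp hkn]
    | succ n ih =>
      rcases Nat.lt_or_ge k (n + 1) with h1 | h1
      · exact (hDsucc n ▸ ((hW2 _ (hDB n) _ (heB (n + 1))).trans
          Set.inter_subset_left)).trans (ih (Nat.lt_succ_iff.mp h1))
      · rw [Nat.le_antisymm hkn h1]
  -- key: every neighborhood of x contains some e n
  have key : ∀ s ∈ 𝓝 x, ∃ n, D n ⊆ s := by
    intro s hs
    obtain ⟨U, hUs, hUopen, hxU⟩ := mem_nhds_iff.mp hs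
    by_contra hcon
    push_neg at hcon
    have hpt : ∀ n, (D n \ U).Nonempty := by
      intro n
      obtain ⟨a, haD, haU⟩ := Set.not_subset.mp
        (fun hsub => hcon n (hsub.trans hUs))
      exact ⟨a, haD, haU⟩
    set y : ℕ → X := fun n => (hpt n).choose with hy
    have hyD : ∀ n, y n ∈ D n := fun n => (hpt n).choose_spec.1
    have hyU : ∀ n, y n ∉ U := fun n => (hpt n).choose_spec.2
    have hytend : Filter.Tendsto y atTop (𝓝 x) := by
      rw [tendsto_nhds]
      intro O hO hxO
      obtain ⟨V, hV, hVO⟩ := (hopen O).mp hO x hxO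
      obtain ⟨k, hk⟩ : ∃ k, e k = V := by
        have : V ∈ Set.range e := he ▸ hV
        exact this
      filter_upwards [Filter.eventually_ge_atTop k] with n hn
      exact hVO (hk ▸ hDe k (hDanti k n hn (hyD n)))
    have hev : ∀ᶠ n in atTop, y n ∈ U := hytend.eventually_mem (hUopen.mem_nhds hxU)
    obtain ⟨j, hj⟩ := hev.exists
    exact hyU j hj
  -- 𝓝 x has the countable basis (e n)
  have hbasis : (𝓝 x).HasBasis (fun _ : ℕ => True) D := by
    rw [Filter.hasBasis_iff]
    intro s
    constructor
    · intro hs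
      obtain ⟨n, hn⟩ := key s hs
      exact ⟨n, trivial, hn⟩
    · rintro ⟨n, -, hn⟩
      exact Filter.mem_of_superset (hB.mem_nhds (hDB n)) hn
  exact hbasis.isCountablyGenerated
end

section
/- Every Hausdorff Fréchet–Urysohn symmetrizable topological space is semi-metrizable. -/
open Filter Topology

/-- A semi-metric: nonnegative, symmetric, and vanishing exactly on the diagonal. -/
def IsSemiMetric {X : Type*} (d : X → X → ℝ) : Prop :=
  (∀ x y, 0 ≤ d x y) ∧ (∀ x y, d x y = d y x) ∧ (∀ x y, d x y = 0 ↔ x = y)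

/-- A topological space is symmetrizable if some semi-metric determines its open sets. -/
def Symmetrizable (X : Type*) [TopologicalSpace X] : Prop :=
  ∃ d : X → X → ℝ, IsSemiMetric d ∧
    ∀ U : Set X, IsOpen U ↔ ∀ x ∈ U, ∃ ε > 0, {y | d x y < ε} ⊆ U

/-- A topological space is semi-metrizable if some semi-metric determines its closure. -/
def SemiMetrizable (X : Type*) [TopologicalSpace X] : Prop :=
  ∃ d : X → X → ℝ, IsSemiMetric d ∧
    ∀ (A : Set X) (x : X), x ∈ closure A ↔ ∀ ε > 0, ∃ a ∈ A, d x a < ε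

/-- Every Hausdorff Fréchet–Urysohn symmetrizable space is semi-metrizable. -/
theorem stmt8 {X : Type*} [TopologicalSpace X] [T2Space X] [FrechetUrysohnSpace X]
    (h : Symmetrizable X) : SemiMetrizable X := by
  obtain ⟨d, hsm, hopen⟩ := h
  obtain ⟨hpos, hsymm, heq⟩ := hsm
  refine ⟨d, ⟨hpos, hsymm, heq⟩, fun A x => ⟨?_, ?_⟩⟩
  · intro hx ε hε
    by_contra hc
    push_neg at hc
    have hxc : x ∈ closure {y | ε ≤ d x y} :=
      closure_mono (fun a ha => hc a ha) hx
    obtain ⟨u, hu, hut⟩ := mem_closure_iff_seq_limit.mp hxc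
    have hcl : IsClosed (insert x (Set.range u)) := hut.isCompact_insert_range.isClosed
    have hxnr : x ∉ Set.range u := by
      rintro ⟨n, hn⟩
      have h1 := hu n
      simp only [Set.mem_setOf_eq, hn, (heq x x).mpr rfl] at h1
      linarith
    have hUopen : IsOpen (Set.range u)ᶜ := by
      rw [hopen]
      intro z hz
      by_cases hzx : z = x
      · subst hzx
        refine ⟨ε, hε, fun y hy hyr => ?_⟩
        obtain ⟨n, rfl⟩ := hyr
        have h1 := hu n
        simp only [Set.mem_setOf_eq] at h1 hy
        linarith
      · have hzmem : z ∈ (insert x (Set.range u))ᶜ := by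
          simp only [Set.mem_compl_iff, Set.mem_insert_iff, not_or]
          exact ⟨hzx, hz⟩
        obtain ⟨δ, hδ, hball⟩ := (hopen _).mp hcl.isOpen_compl z hzmem
        exact ⟨δ, hδ, fun y hy hyr =>
          hball hy (Set.mem_insert_iff.mpr (Or.inr hyr))⟩
    have hxcl : x ∈ closure (Set.range u) :=
      mem_closure_of_tendsto hut (Eventually.of_forall fun n => Set.mem_range_self n)
    obtain ⟨y, hy1, hy2⟩ := mem_closure_iff.mp hxcl _ hUopen hxnr
    exact hy1 hy2
  · intro h'
    by_contra hx
    obtain ⟨ε, hε, hball⟩ :=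
      (hopen (closure A)ᶜ).mp isClosed_closure.isOpen_compl x hx
    obtain ⟨a, ha, hd⟩ := h' ε hε
    exact hball hd (subset_closure ha)
end

section
/- A topological space X is an accessibility space if and only if it is topologically maximal within the class of pretopologies, i.e., for every vicinity map V : X → Filter X such that every x has all its neighborhoods in V x (V x is finer than the neighborhood filter 𝓝 x) and the open sets of the topology induced by V coincide with the open sets of X, one has V x = 𝓝 x for every x ∈ X. -/
open Filter Topology

/-- Whyburn's accessibility property: whenever `x₀` is in the closure of
`H \ {x₀}`, there is a closed set `F` accumulating at `x₀` whose part outside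
`H` does not accumulate at `x₀`. -/
def AccessibilitySpace (X : Type*) [TopologicalSpace X] : Prop :=
  ∀ (x₀ : X) (H : Set X), x₀ ∈ closure (H \ {x₀}) →
    ∃ F : Set X, IsClosed F ∧ x₀ ∈ closure (F \ {x₀}) ∧ x₀ ∉ closure ((F \ H) \ {x₀})

/-- A topological space is an accessibility space iff it is topologically maximal
within the class of pretopologies: every vicinity map finer than the neighborhood
filters and inducing the same open sets must consist of the neighborhood filters. -/
theorem stmt10 {X : Type*} [TopologicalSpace X] :
    AccessibilitySpace X ↔
      ∀ V : X → Filter X, (∀ x, pure x ≤ V x) → (∀ x, V x ≤ 𝓝 x) →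
        (∀ U : Set X, (∀ x ∈ U, U ∈ V x) ↔ IsOpen U) → ∀ x, V x = 𝓝 x := by
  constructor
  · -- accessibility → maximality
    intro hacc V hpure hle hopen x
    refine le_antisymm (hle x) ?_
    intro S hS
    by_contra hSn
    have hxS : x ∈ S := hpure x hS
    have hxcl : x ∈ closure Sᶜ := by
      rw [closure_compl]
      exact fun h => hSn (mem_interior_iff_mem_nhds.mp h)
    have hxcl' : x ∈ closure (Sᶜ \ {x}) := by
      rwa [Set.diff_singleton_eq_self (fun h => (h : x ∈ Sᶜ) hxS)]
    obtain ⟨F, hFc, hFx, hFH⟩ := hacc x Sᶜ hxcl'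
    rw [Set.diff_compl] at hFH
    set A : Set X := (F ∩ S) \ {x} with hA
    set W : Set X := (closure A)ᶜ with hWdef
    have hW : IsOpen W := isClosed_closure.isOpen_compl
    have hxW : x ∈ W := hFH
    set U : Set X := (Fᶜ ∩ W) ∪ {x} with hUdef
    have hU : ∀ y ∈ U, U ∈ V y := by
      intro y hy
      rcases hy with hy | hy
      · exact hle y (mem_nhds_iff.mpr ⟨Fᶜ ∩ W, Set.subset_union_left,
          (hFc.isOpen_compl.inter hW), hy⟩)
      · rcases hy with rfl
        have hSW : S ∩ W ∈ V y := Filter.inter_mem hS (hle y (hW.mem_nhds hxW))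
        refine Filter.mem_of_superset hSW ?_
        rintro z ⟨hzS, hzW⟩
        by_cases hz : z = y
        · exact Or.inr hz
        · refine Or.inl ⟨fun hzF => hzW (subset_closure ⟨⟨hzF, hzS⟩, hz⟩), hzW⟩
    have hUo : IsOpen U := (hopen U).mp hU
    have : (U ∩ (F \ {x})).Nonempty :=
      mem_closure_iff_nhds.mp hFx U (hUo.mem_nhds (Or.inr rfl))
    obtain ⟨z, hzU, hzF, hzx⟩ := this
    rcases hzU with hzU | hzU
    · exact hzU.1 hzF
    · exact hzx hzU
  · -- maximality → accessibility
    intro hmax x₀ H hH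
    by_contra h0
    push_neg at h0
    classical
    set V : X → Filter X := fun y => if y = x₀ then 𝓝 x₀ ⊓ 𝓟 (Hᶜ ∪ {x₀}) else 𝓝 y
        with hV
    have hVx₀ : V x₀ = 𝓝 x₀ ⊓ 𝓟 (Hᶜ ∪ {x₀}) := by simp [hV]
    have hVle : ∀ y, V y ≤ 𝓝 y := by
      intro y
      by_cases hy : y = x₀
      · subst hy; rw [hVx₀]; exact inf_le_left
      · simp [hV, hy]
    have hVpure : ∀ y, pure y ≤ V y := by
      intro y
      by_cases hy : y = x₀
      · subst hy
        rw [hVx₀]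
        exact le_inf (pure_le_nhds y) (by
          rw [Filter.le_principal_iff, Filter.mem_pure]; exact Or.inr rfl)
      · simp only [hV, hy, if_false]; exact pure_le_nhds y
    have hVopen : ∀ U : Set X, (∀ x ∈ U, U ∈ V x) ↔ IsOpen U := by
      intro U
      constructor
      · intro hU
        rw [isOpen_iff_mem_nhds]
        intro y hyU
        by_cases hy : y = x₀
        · subst hy
          by_contra hUn
          have hycl : y ∈ closure Uᶜ := by
            rw [closure_compl]
            exact fun h => hUn (mem_interior_iff_mem_nhds.mp h)
          -- every point of U other than y has U as a neighborhood
          have hUnb : ∀ z ∈ U, z ≠ y → z ∉ closure Uᶜ := by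
            intro z hzU hzy hzc
            have : U ∈ V z := hU z hzU
            simp only [hV, if_neg hzy] at this
            obtain ⟨w, hwU, hwc⟩ := mem_closure_iff_nhds.mp hzc U this
            exact hwc hwU
          set F : Set X := closure Uᶜ with hF
          have hFc : IsClosed F := isClosed_closure
          have hsub : Uᶜ ⊆ F \ {y} := fun z hz =>
            ⟨subset_closure hz, fun h => hz (h ▸ hyU)⟩
          have hyF : y ∈ closure (F \ {y}) := closure_mono hsub hycl
          have key := h0 F hFc hyF
          -- (F \ H) \ {y} ⊆ Uᶜ ∩ Hᶜ
          have hsub2 : (F \ H) \ {y} ⊆ Uᶜ ∩ Hᶜ := by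
            rintro z ⟨⟨hzF, hzH⟩, hzy⟩
            refine ⟨fun hzU => hUnb z hzU hzy hzF, hzH⟩
          have hycl2 : y ∈ closure (Uᶜ ∩ Hᶜ) := closure_mono hsub2 key
          -- but U ∈ V y gives a neighborhood avoiding Uᶜ ∩ Hᶜ
          have hUV : U ∈ V y := hU y hyU
          rw [hVx₀, Filter.mem_inf_principal] at hUV
          obtain ⟨w, hwN, hwc⟩ := mem_closure_iff_nhds.mp hycl2 _ hUV
          exact hwc.1 (hwN (Or.inl hwc.2))
        · have := hU y hyU
          simpa only [hV, if_neg hy] using this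
      · intro hUo x hxU
        exact hVle x (hUo.mem_nhds hxU)
    have := hmax V hVpure hVle hVopen x₀
    rw [hVx₀] at this
    have hle' : 𝓝 x₀ ≤ 𝓟 (Hᶜ ∪ {x₀}) := this ▸ inf_le_right
    have hmem : Hᶜ ∪ {x₀} ∈ 𝓝 x₀ := Filter.le_principal_iff.mp hle'
    obtain ⟨z, hzN, hzH, hzx⟩ := mem_closure_iff_nhds.mp hH _ hmem
    rcases hzN with hzN | hzN
    · exact hzN hzH
    · exact hzx hzN
end

section
/- Every sequential accessibility topological space is Fréchet–Urysohn. -/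
open Filter Topology

/-- Every sequential accessibility space is Fréchet–Urysohn. -/
theorem stmt11 {X : Type*} [TopologicalSpace X] [SequentialSpace X]
    (h : AccessibilitySpace X) : FrechetUrysohnSpace X := by
  constructor
  intro A x hx
  -- If x ∈ A, take constant sequence
  by_cases hxA : x ∈ A
  · exact ⟨fun _ => x, fun _ => hxA, tendsto_const_nhds⟩
  -- otherwise x ∈ closure (A \ {x})
  have hx' : x ∈ closure (A \ {x}) := by
    have : A \ {x} = A := Set.diff_singleton_eq_self hxA
    rwa [this]
  obtain ⟨F, hFclosed, hxF, hxout⟩ := h x A hx'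
  -- there is a sequence in F \ {x} tending to x
  have hseq : ∃ u : ℕ → X, (∀ n, u n ∈ F \ {x}) ∧ Tendsto u atTop (𝓝 x) := by
    by_contra hcon
    push_neg at hcon
    have hsc : IsSeqClosed (F \ ({x} : Set X)) := by
      intro u y hu huy
      by_cases hyx : y = x
      · exact absurd (hyx ▸ huy) (hcon u hu)
      · exact ⟨hFclosed.isSeqClosed (fun n => (hu n).1) huy, hyx⟩
    have := hsc.isClosed.closure_subset hxF
    exact this.2 rfl
  obtain ⟨u, hu, hlim⟩ := hseq
  -- eventually u n ∈ A
  have hUnbhd : ∀ᶠ n in atTop, u n ∈ A := by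
    have hUopen : (closure ((F \ A) \ {x}))ᶜ ∈ 𝓝 x :=
      isClosed_closure.isOpen_compl.mem_nhds hxout
    filter_upwards [hlim hUopen] with n hn
    by_contra hnA
    exact hn (subset_closure ⟨⟨(hu n).1, hnA⟩, (hu n).2⟩)
  obtain ⟨N, hN⟩ := eventually_atTop.mp hUnbhd
  refine ⟨fun n => u (N + n), fun n => hN _ (Nat.le_add_right _ _), ?_⟩
  exact hlim.comp (tendsto_atTop_mono (fun n => Nat.le_add_left n N) tendsto_id)
end

section
/- Every weakly first countable accessibility topological space is first countable (every point has a countable neighborhood basis). -/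
open Filter Topology

theorem mem_nhds_of_weakBase {X : Type*} [TopologicalSpace X] {B : X → Set (Set X)}
    (hB : IsWeakBase B) (ha : AccessibilitySpace X) {x₀ : X} {V : Set X} (hV : V ∈ B x₀) :
    V ∈ 𝓝 x₀ := by
  obtain ⟨-, hinter, hmem, hopen⟩ := hB
  by_contra hnot
  have hx₀V : x₀ ∈ V := hmem x₀ V hV
  -- x₀ is in the closure of Vᶜ
  have hcl : x₀ ∈ closure Vᶜ := by
    rw [mem_closure_iff]
    intro o ho hxo
    rcases Set.eq_empty_or_nonempty (o ∩ Vᶜ) with he | hne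
    · exact absurd (mem_nhds_iff.mpr ⟨o, fun y hy => by
        by_contra hyV
        exact Set.eq_empty_iff_forall_notMem.mp he y ⟨hy, hyV⟩, ho, hxo⟩) hnot
    · exact hne
  have hx₀H : x₀ ∉ (Vᶜ : Set X) := fun h => h hx₀V
  have hcl' : x₀ ∈ closure ((Vᶜ : Set X) \ {x₀}) := by
    rwa [Set.diff_singleton_eq_self hx₀H]
  obtain ⟨F, hFc, hF1, hF2⟩ := ha x₀ Vᶜ hcl'
  set E := closure ((F \ Vᶜ) \ {x₀}) with hE
  have hEc : IsOpen Eᶜ := isClosed_closure.isOpen_compl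
  have hx₀E : x₀ ∈ Eᶜ := hF2
  obtain ⟨V₂, hV₂, hV₂E⟩ := (hopen Eᶜ).mp hEc x₀ hx₀E
  obtain ⟨W, hW, hWsub⟩ := hinter x₀ V hV V₂ hV₂
  -- the open set separating x₀ from F \ {x₀}
  set O := ((Fᶜ ∪ {x₀}) ∩ Eᶜ : Set X) with hO
  have hOopen : IsOpen O := by
    rw [hopen]
    intro y hy
    by_cases hyx : y = x₀
    · subst hyx
      refine ⟨W, hW, fun w hw => ?_⟩
      have hwV : w ∈ V := (hWsub hw).1
      have hwE : w ∈ Eᶜ := hV₂E (hWsub hw).2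
      refine ⟨?_, hwE⟩
      by_cases hwF : w ∈ F
      · by_cases hwx : w = y
        · exact Or.inr hwx
        · exact absurd (subset_closure (s := (F \ Vᶜ) \ {y}) ⟨⟨hwF, fun h => h hwV⟩, hwx⟩) hwE
      · exact Or.inl hwF
    · have hyF : y ∈ Fᶜ := by
        rcases hy.1 with h | h
        · exact h
        · exact absurd h hyx
      obtain ⟨Vy, hVy, hVysub⟩ := (hopen (Fᶜ ∩ Eᶜ)).mp
        ((hFc.isOpen_compl).inter hEc) y ⟨hyF, hy.2⟩
      exact ⟨Vy, hVy, fun w hw => ⟨Or.inl (hVysub hw).1, (hVysub hw).2⟩⟩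
  have hx₀O : x₀ ∈ O := ⟨Or.inr rfl, hx₀E⟩
  obtain ⟨z, hzO, hzF, hzx⟩ := mem_closure_iff.mp hF1 O hOopen hx₀O
  rcases hzO.1 with h | h
  · exact h hzF
  · exact hzx h

/-- Every weakly first countable accessibility space is first countable. -/
theorem stmt12 {X : Type*} [TopologicalSpace X]
    (hw : WeaklyFirstCountable X) (ha : AccessibilitySpace X) :
    FirstCountableTopology X := by
  obtain ⟨B, hB, hcount⟩ := hw
  constructor
  intro x
  have : Countable ↥(B x) := (hcount x).to_subtype
  have hbasis : (𝓝 x).HasBasis (fun _ : ↥(B x) => True) (fun V => (V : Set X)) := by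
    constructor
    intro t
    constructor
    · intro ht
      rcases mem_nhds_iff.mp ht with ⟨u, hut, hu, hxu⟩
      rcases (hB.2.2.2 u).mp hu x hxu with ⟨V, hVB, hVu⟩
      exact ⟨⟨V, hVB⟩, trivial, hVu.trans hut⟩
    · rintro ⟨⟨V, hVB⟩, -, hVt⟩
      exact Filter.mem_of_superset (mem_nhds_of_weakBase hB ha hVB) hVt
  exact hbasis.isCountablyGenerated
end

section
/- Every symmetrizable accessibility topological space is semi-metrizable. -/
open Filter Topology

/-- Every symmetrizable accessibility space is semi-metrizable. -/
theorem stmt13 {X : Type*} [TopologicalSpace X]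
    (hs : Symmetrizable X) (ha : AccessibilitySpace X) : SemiMetrizable X := by
  obtain ⟨d, hd, hopen⟩ := hs
  obtain ⟨hpos, hsymm, hzero⟩ := hd
  refine ⟨d, ⟨hpos, hsymm, hzero⟩, fun A x => ⟨fun hx ε hε => ?_, fun h => ?_⟩⟩
  · -- hard direction: x ∈ closure A ⇒ points of A come d-close to x
    by_contra hcon
    push_neg at hcon
    have hfar : ∀ a ∈ A, ε ≤ d x a := fun a ha' => le_of_not_gt (by
      intro hlt
      exact absurd hlt (not_lt.mpr (hcon a ha')))
    have hxA : x ∉ A := by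
      intro hxA
      have := hfar x hxA
      rw [(hzero x x).mpr rfl] at this
      linarith
    set H : Set X := {y | ε ≤ d x y} with hH
    have hAH : A ⊆ H \ {x} := by
      intro a ha'
      refine ⟨hfar a ha', ?_⟩
      intro hax
      exact hxA (by rwa [Set.mem_singleton_iff.mp hax] at ha')
    have hxH : x ∈ closure (H \ {x}) := closure_mono hAH hx
    obtain ⟨F, hFc, hxF, hxK⟩ := ha x H hxH
    set K := closure ((F \ H) \ {x}) with hK
    -- get a ball around x avoiding K
    have hKo : IsOpen Kᶜ := isClosed_closure.isOpen_compl
    obtain ⟨δ, hδ, hball⟩ := (hopen Kᶜ).1 hKo x hxK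
    -- the ball of radius min δ ε meets F only in x
    have hballF : ∀ z, d x z < min δ ε → z ∈ F → z = x := by
      intro z hz hzF
      by_contra hzx
      have hzH : z ∉ H := by
        simp only [hH, Set.mem_setOf_eq, not_le]
        exact hz.trans_le (min_le_right _ _)
      have hzK : z ∈ K := subset_closure ⟨⟨hzF, hzH⟩, hzx⟩
      exact (hball (show d x z < δ from hz.trans_le (min_le_left _ _))) hzK
    -- V = {x} ∪ Fᶜ is open
    have hVo : IsOpen ({x} ∪ Fᶜ : Set X) := by
      rw [hopen]
      intro y hy
      rcases hy with hy | hy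
      · refine ⟨min δ ε, lt_min hδ hε, fun z hz => ?_⟩
        rw [Set.mem_singleton_iff.mp hy] at hz
        by_cases hzF : z ∈ F
        · exact Or.inl (hballF z hz hzF)
        · exact Or.inr hzF
      · obtain ⟨ε', hε', hball'⟩ := (hopen Fᶜ).1 hFc.isOpen_compl y hy
        exact ⟨ε', hε', fun z hz => Or.inr (hball' hz)⟩
    -- but V is a neighborhood of x disjoint from F \ {x}
    have hxV : x ∈ ({x} ∪ Fᶜ : Set X) := Or.inl rfl
    obtain ⟨z, hzV, hzF⟩ := mem_closure_iff.mp hxF _ hVo hxV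
    rcases hzV with hzV | hzV
    · exact hzF.2 hzV
    · exact hzV hzF.1
  · -- easy direction
    by_contra hx
    have hco : IsOpen (closure A)ᶜ := isClosed_closure.isOpen_compl
    obtain ⟨ε, hε, hball⟩ := (hopen _).1 hco x hx
    obtain ⟨a, haA, hda⟩ := h ε hε
    exact (hball hda) (subset_closure haA)
end

section
/- A topological space X is strongly Fréchet if and only if for every metrizable topological space Y with at most one non-isolated point, the product X × Y is Fréchet–Urysohn. -/
open Filter Topology Set OnePoint

universe u

/-- A topological space is strongly Fréchet if every countably generated filter
clustering at `x` admits a finer convergent sequence. -/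
def StronglyFrechet (X : Type u) [TopologicalSpace X] : Prop :=
  ∀ (x : X) (H : Filter X), H.IsCountablyGenerated → 𝓝 x ⊓ H ≠ ⊥ →
    ∃ u : ℕ → X, Filter.Tendsto u Filter.atTop (𝓝 x) ∧
      ∀ s ∈ H, ∀ᶠ n in Filter.atTop, u n ∈ s

lemma dia {α : Type*} (u : ℕ → α) (S : ℕ → Set α)
    (h : ∀ m, ∀ᶠ n in atTop, u n ∈ S m) :
    ∃ φ : ℕ → ℕ, Tendsto φ atTop atTop ∧ ∀ᶠ n in atTop, u n ∈ S (φ n) := by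
  choose N hN using fun m => (h m).exists_forall_of_atTop
  set N' : ℕ → ℕ := fun m => (Finset.range (m + 1)).sup N + m with hN'
  have hNle : ∀ m, N m ≤ N' m := fun m =>
    le_add_right (Finset.le_sup (Finset.mem_range.2 (Nat.lt_succ_self m)))
  have hmle : ∀ m, m ≤ N' m := fun m => le_add_left le_rfl
  set φ : ℕ → ℕ := fun n => sSup {m | N' m ≤ n} with hφdef
  have hbdd : ∀ n, BddAbove {m | N' m ≤ n} := fun n =>
    ⟨n, fun m hm => le_trans (hmle m) hm⟩
  have hmem : ∀ n, N' 0 ≤ n → φ n ∈ {m | N' m ≤ n} := fun n hn =>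
    Nat.sSup_mem ⟨0, hn⟩ (hbdd n)
  refine ⟨φ, ?_, ?_⟩
  · refine tendsto_atTop.2 fun M => ?_
    filter_upwards [eventually_ge_atTop (N' M)] with n hn
    exact le_csSup (hbdd n) hn
  · filter_upwards [eventually_ge_atTop (N' 0)] with n hn
    exact hN (φ n) n (le_trans (hNle _) (hmem n hn))

lemma forward {X Y : Type*} [TopologicalSpace X] [TopologicalSpace Y]
    [FirstCountableTopology Y] (hX : StronglyFrechet X) :
    FrechetUrysohnSpace (X × Y) := by
  constructor
  rintro A ⟨x, y⟩ hz
  have hclus : NeBot (𝓝 (x, y) ⊓ 𝓟 A) := mem_closure_iff_clusterPt.1 hz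
  set G : Filter (X × Y) := 𝓟 A ⊓ comap Prod.snd (𝓝 y) with hG
  have hle : 𝓝 (x, y) ≤ comap Prod.snd (𝓝 y) := by
    rw [nhds_prod_eq]; exact inf_le_right
  have hinf : 𝓝 (x, y) ⊓ G = 𝓝 (x, y) ⊓ 𝓟 A := by
    rw [hG, inf_comm (𝓟 A), ← inf_assoc, inf_of_le_left hle]
  set H : Filter X := Filter.map Prod.fst G with hH
  have hHc : H.IsCountablyGenerated := by
    have : G.IsCountablyGenerated := by infer_instance
    infer_instance
  have hne : 𝓝 x ⊓ H ≠ ⊥ := by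
    have h1 : NeBot (𝓝 (x, y) ⊓ G) := by rw [hinf]; exact hclus
    have h2 : Filter.map Prod.fst (𝓝 (x, y) ⊓ G) ≤ 𝓝 x ⊓ H := by
      refine le_inf (le_trans (map_mono inf_le_left) ?_) (map_mono inf_le_right)
      rw [nhds_prod_eq]; exact tendsto_fst
    exact Filter.neBot_iff.1 (neBot_of_le h2)
  obtain ⟨u, hu, humem⟩ := hX x H hHc hne
  obtain ⟨B, hB⟩ := (𝓝 y).exists_antitone_basis
  have hS : ∀ m, ∀ᶠ n in atTop, u n ∈ Prod.fst '' (A ∩ Prod.snd ⁻¹' B m) := by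
    intro m
    refine humem _ ?_
    rw [hH, mem_map]
    have h1 : A ∈ G := mem_inf_of_left (mem_principal_self A)
    have h2 : Prod.snd ⁻¹' B m ∈ G :=
      mem_inf_of_right (preimage_mem_comap (hB.1.mem_of_mem trivial))
    exact mem_of_superset (inter_mem h1 h2) (subset_preimage_image _ _)
  obtain ⟨φ, hφ, hev⟩ := dia u _ hS
  obtain ⟨K, hK⟩ := hev.exists_forall_of_atTop
  have sel : ∀ n : ℕ, ∃ w : X × Y, w ∈ A ∧ w.2 ∈ B (φ (n + K)) ∧ w.1 = u (n + K) := by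
    intro n
    obtain ⟨w, ⟨hwA, hwB⟩, hwf⟩ := hK (n + K) (Nat.le_add_left K n)
    exact ⟨w, hwA, hwB, hwf⟩
  choose w hwA hwB hwf using sel
  refine ⟨w, hwA, ?_⟩
  rw [nhds_prod_eq, tendsto_prod_iff']
  constructor
  · have : (fun n => (w n).1) = fun n => u (n + K) := funext hwf
    rw [this]
    exact hu.comp (tendsto_add_atTop_nat K)
  · rw [hB.1.tendsto_right_iff]
    intro m _
    have : Tendsto (fun n => φ (n + K)) atTop atTop := hφ.comp (tendsto_add_atTop_nat K)
    filter_upwards [this.eventually_ge_atTop m] with n hn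
    exact hB.2 hn (hwB n)

abbrev Ypm : Type u := ULift.{u} (OnePoint ℕ)

lemma Ypm_metrizable : TopologicalSpace.MetrizableSpace (Ypm.{u}) :=
  (Homeomorph.ulift (X := OnePoint ℕ)).isEmbedding.metrizableSpace

lemma Ypm_isolated (n : ℕ) : IsOpen ({ULift.up ((n : OnePoint ℕ))} : Set Ypm.{u}) := by
  have h1 : IsOpen ({((n : OnePoint ℕ))} : Set (OnePoint ℕ)) := by
    have : ({((n : OnePoint ℕ))} : Set (OnePoint ℕ)) = (↑) '' {n} := by simp
    rw [this]
    exact isOpen_image_coe.2 (isOpen_discrete _)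
  have h2 : ({ULift.up ((n : OnePoint ℕ))} : Set Ypm.{u}) =
      (Homeomorph.ulift (X := OnePoint ℕ)) ⁻¹' {((n : OnePoint ℕ))} := by
    ext z
    simp only [Set.mem_singleton_iff, Set.mem_preimage]
    constructor
    · rintro rfl; rfl
    · intro h
      have : z.down = (n : OnePoint ℕ) := h
      cases z; simp_all
  rw [h2]
  exact (Homeomorph.ulift (X := OnePoint ℕ)).isOpen_preimage.2 h1

lemma Ypm_prime : ({y : Ypm.{u} | ¬IsOpen ({y} : Set Ypm.{u})}).Subsingleton := by
  have key : ∀ y : Ypm.{u}, y.down ≠ ∞ → IsOpen ({y} : Set Ypm.{u}) := by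
    intro y hy
    obtain ⟨n, hn⟩ := OnePoint.ne_infty_iff_exists.1 hy
    have hy' : y = ULift.up ((n : OnePoint ℕ)) := by cases y; cases hn; rfl
    rw [hy']
    exact Ypm_isolated n
  intro a ha b hb
  have ha' : a.down = ∞ := by by_contra h; exact ha (key a h)
  have hb' : b.down = ∞ := by by_contra h; exact hb (key b h)
  cases a; cases b; cases ha'; cases hb'; rfl

lemma backward {X : Type u} [TopologicalSpace X]
    (hFU : FrechetUrysohnSpace (X × Ypm.{u})) : StronglyFrechet X := by
  intro x ℋ hcg hne
  have hnb : NeBot (𝓝 x ⊓ ℋ) := Filter.neBot_iff.2 hne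
  obtain ⟨H, hH⟩ := ℋ.exists_antitone_basis
  have hmeet : ∀ V ∈ 𝓝 x, ∀ n : ℕ, (V ∩ H n).Nonempty := fun V hV n =>
    Filter.inf_neBot_iff.1 hnb hV (hH.1.mem_of_mem trivial)
  set e : Ypm.{u} ≃ₜ OnePoint ℕ := Homeomorph.ulift with he
  set A : Set (X × Ypm.{u}) :=
    {p | ∃ n : ℕ, p.1 ∈ H n ∧ p.2 = ULift.up ((n : OnePoint ℕ))} with hA
  have hcl : (x, ULift.up (∞ : OnePoint ℕ)) ∈ closure A := by
    rw [mem_closure_iff_nhds]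
    intro U hU
    rw [mem_nhds_prod_iff] at hU
    obtain ⟨V, hV, W, hW, hVW⟩ := hU
    have hW' : e.symm ⁻¹' W ∈ 𝓝 (∞ : OnePoint ℕ) := by
      refine e.symm.continuous.continuousAt.preimage_mem_nhds ?_
      have : e.symm (∞ : OnePoint ℕ) = ULift.up (∞ : OnePoint ℕ) := rfl
      rwa [this]
    have hinst : NeBot (𝓝[≠] (∞ : OnePoint ℕ)) := inferInstance
    have hmem2 : (e.symm ⁻¹' W) ∩ {(∞ : OnePoint ℕ)}ᶜ ∈ 𝓝[≠] (∞ : OnePoint ℕ) :=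
      inter_mem (mem_nhdsWithin_of_mem_nhds hW') self_mem_nhdsWithin
    obtain ⟨a, haW, hane⟩ := Filter.nonempty_of_mem hmem2
    obtain ⟨n, rfl⟩ := OnePoint.ne_infty_iff_exists.1 hane
    obtain ⟨z, hzV, hzH⟩ := hmeet V hV n
    refine ⟨(z, ULift.up ((n : OnePoint ℕ))), hVW ⟨hzV, haW⟩, n, hzH, rfl⟩
  obtain ⟨p, hpA, hp⟩ := mem_closure_iff_seq_limit.1 hcl
  choose nk hn1 hn2 using hpA
  refine ⟨fun k => (p k).1, ?_, ?_⟩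
  · exact (continuous_fst.tendsto _).comp hp
  · intro s hs
    obtain ⟨m, -, hms⟩ := hH.1.mem_iff.1 hs
    have hopen : IsOpen (((↑) '' (Set.Iio m) : Set (OnePoint ℕ))ᶜ) :=
      isOpen_compl_image_coe.2 ⟨isClosed_discrete _, (Set.finite_Iio m).isCompact⟩
    have hmemU : (∞ : OnePoint ℕ) ∈ ((↑) '' (Set.Iio m) : Set (OnePoint ℕ))ᶜ :=
      infty_notMem_image_coe
    have hopen' : IsOpen (e ⁻¹' ((↑) '' (Set.Iio m) : Set (OnePoint ℕ))ᶜ) :=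
      e.continuous.isOpen_preimage _ hopen
    have hmemU' : ULift.up (∞ : OnePoint ℕ) ∈
        e ⁻¹' ((↑) '' (Set.Iio m) : Set (OnePoint ℕ))ᶜ := hmemU
    have hsnd : Tendsto (fun k => (p k).2) atTop (𝓝 (ULift.up (∞ : OnePoint ℕ))) :=
      (continuous_snd.tendsto _).comp hp
    filter_upwards [hsnd.eventually (hopen'.mem_nhds hmemU')] with k hk
    have hek : e ((p k).2) = ((nk k : ℕ) : OnePoint ℕ) := by rw [hn2 k]; rfl
    have hnotin : ((nk k : ℕ) : OnePoint ℕ) ∈ ((↑) '' (Set.Iio m) : Set (OnePoint ℕ))ᶜ := by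
      rw [← hek]; exact hk
    have hge : m ≤ nk k := by
      by_contra hlt
      exact hnotin ⟨nk k, by simpa using Nat.lt_of_not_le hlt, rfl⟩
    exact hms (hH.2 hge (hn1 k))

/-- A space is strongly Fréchet iff its product with every prime metrizable space
(metrizable with at most one non-isolated point) is Fréchet–Urysohn. -/
theorem stmt14 {X : Type u} [TopologicalSpace X] :
    StronglyFrechet X ↔
      ∀ (Y : Type u) [TopologicalSpace Y], TopologicalSpace.MetrizableSpace Y →
        ({y : Y | ¬IsOpen ({y} : Set Y)}).Subsingleton →
        FrechetUrysohnSpace (X × Y) := by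
  constructor
  · intro hX Y _ hmet _
    haveI : TopologicalSpace.MetrizableSpace Y := hmet
    exact forward hX
  · intro h
    exact backward (h Ypm Ypm_metrizable Ypm_prime)
end

section
/- If X is a regular Hausdorff sequential topological space in which every point has a countably compact neighborhood, then X × Y is sequential for every metrizable topological space Y. -/
/-!
Fix a sequentially closed `A ⊆ X × Y` and `(x, y) ∉ A`. The slice `{x' | (x', y) ∈ A}` is
sequentially closed, hence closed, so by regularity `x` has a closed countably compact
neighbourhood `S` missing it. In a `T₁` sequential space closed countably compact sets are
sequentially compact. If every `S ×ˢ B n`, for a countable antitone basis `B` at `y`, met `A`, a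
subsequence of the chosen points would converge to some `(x', y)` with `x' ∈ S`, and `(x', y)`
would lie in `A`, which is absurd.
-/

open Filter Topology

universe u

def CountablyCompactSet {X : Type*} [TopologicalSpace X] (K : Set X) : Prop :=
  ∀ U : ℕ → Set X, (∀ n, IsOpen (U n)) → K ⊆ ⋃ n, U n →
    ∃ t : Finset ℕ, K ⊆ ⋃ n ∈ t, U n

open Set

theorem IsCountablyCompact.isSeqCompact_of_isClosed {X : Type*} [TopologicalSpace X]
    [T1Space X] [SequentialSpace X] {A : Set X} (hA : IsCountablyCompact A)
    (hAc : IsClosed A) : IsSeqCompact A := by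
  intro u hu
  by_contra! hconv
  obtain ⟨a, haA, ha⟩ := hA.seq_clusterPt u (.of_forall hu)
  have hfreq : ∃ᶠ n in atTop, u n = a := by
    refine frequently_atTop.mpr fun n => ?_
    -- A tail of `u` has no convergent subsequence either, so its range is closed.
    have htail : IsClosed (range fun k => u (k + n)) :=
      isClosed_range_of_not_tendsto fun l φ hφ hl =>
        hconv l (hAc.mem_of_tendsto hl (.of_forall fun _ => hu _)) (φ · + n)
          (fun _ _ h => Nat.add_lt_add_right (hφ h) n) hl
    have hsub : u '' Ici n ⊆ range fun k => u (k + n) := by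
      rintro _ ⟨m, hm, rfl⟩
      exact ⟨m - n, congrArg u (Nat.sub_add_cancel hm)⟩
    obtain ⟨k, hk⟩ := htail.closure_subset_iff.mpr hsub
      (mapClusterPt_atTop_iff_forall_mem_closure.mp ha n)
    exact ⟨k + n, Nat.le_add_left n k, hk⟩
  obtain ⟨φ, hφ, hφa⟩ := extraction_of_frequently_atTop hfreq
  exact hconv a haA φ hφ (tendsto_const_nhds.congr fun k => (hφa k).symm)

theorem sequentialSpace_prod_of_locally_isCountablyCompact {X Y : Type*} [TopologicalSpace X]
    [TopologicalSpace Y] [T1Space X] [RegularSpace X] [SequentialSpace X]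
    [FirstCountableTopology Y] (hX : ∀ x : X, ∃ K ∈ 𝓝 x, IsCountablyCompact K) :
    SequentialSpace (X × Y) := by
  refine ⟨fun A hA => ?_⟩
  rw [← isOpen_compl_iff, isOpen_iff_mem_nhds]
  rintro ⟨x, y⟩ hxy
  have hslice : IsClosed ((·, y) ⁻¹' A) :=
    (hA.preimage (continuous_id.prodMk continuous_const).seqContinuous).isClosed
  obtain ⟨K, hK, hKcc⟩ := hX x
  obtain ⟨S, ⟨hS, hSclosed⟩, hSsub⟩ := (closed_nhds_basis x).mem_iff.mp
    (inter_mem hK (hslice.isOpen_compl.mem_nhds hxy))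
  have hSseq : IsSeqCompact S :=
    (hKcc.of_isClosed_subset hSclosed fun _ h => (hSsub h).1).isSeqCompact_of_isClosed hSclosed
  obtain ⟨B, hB⟩ := (𝓝 y).exists_antitone_basis
  by_contra hAc
  have hmeet : ∀ n, ∃ p ∈ A, p ∈ S ×ˢ B n := fun n => by
    by_contra! hn
    exact hAc (mem_of_superset (prod_mem_nhds hS (hB.mem n)) fun p hp hpA => hn p hpA hp)
  choose p hpA hpS using hmeet
  obtain ⟨x', hx'S, φ, hφ, hx'⟩ := hSseq fun n => (hpS n).1
  have hlim : Tendsto (p ∘ φ) atTop (𝓝 (x', y)) :=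
    hx'.prodMk_nhds ((hB.tendsto fun n => (hpS n).2).comp hφ.tendsto_atTop)
  exact (hSsub hx'S).2 (hA (fun k => hpA (φ k)) hlim)

/-- A regular Hausdorff sequential space in which every point has a countably compact
neighborhood has sequential product with every metrizable space. -/
theorem stmt15 {X : Type u} [TopologicalSpace X] [T2Space X] [RegularSpace X]
    [SequentialSpace X] (h : ∀ x : X, ∃ K ∈ 𝓝 x, CountablyCompactSet K) :
    ∀ (Y : Type u) [TopologicalSpace Y], TopologicalSpace.MetrizableSpace Y →
      SequentialSpace (X × Y) := fun _ _ _ =>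
  sequentialSpace_prod_of_locally_isCountablyCompact fun x =>
    (h x).imp fun _ ⟨hK, hKcc⟩ => ⟨hK, isCountablyCompact_iff_countable_open_cover.mpr hKcc⟩
end

section
/- Let X be a Hausdorff topological space. Then X × Y is weakly first countable for every metrizable topological space Y if and only if X × Y is weakly first countable for every metrizable topological space Y with at most one non-isolated point. -/
/-!
Fix a metric on `Y`. For `y₀ : Y`, the pinched metric `d(a, y₀) + d(b, y₀)` (for `a ≠ b`) gives
a prime metrizable space `Y_{y₀}` whose topology is finer than that of `Y` and agrees with it at
`y₀`. Choosing for every point `(x, y)` its weak neighbourhoods from a countable weak base of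
`X × Y_y` yields a countable weak base of `X × Y`. That a set absorbing these is open rests on
two facts: a weakly first countable space is sequential, and in a Hausdorff space each member of a
weak base at `z` is a sequential neighbourhood of `z`.
-/

open Filter Topology

universe u

open Set

namespace IsWeakBase

variable {Z : Type*} [TopologicalSpace Z] {B : Z → Set (Set Z)}

theorem isOpen_iff (hB : IsWeakBase B) {U : Set Z} :
    IsOpen U ↔ ∀ z ∈ U, ∃ V ∈ B z, V ⊆ U :=
  hB.2.2.2 U

theorem eventually_mem_of_tendsto [T2Space Z] (hB : IsWeakBase B) {z : Z} {V : Set Z}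
    (hV : V ∈ B z) {g : ℕ → Z} (hg : Tendsto g atTop (𝓝 z)) : ∀ᶠ n in atTop, g n ∈ V := by
  by_contra hcon
  obtain ⟨φ, hφ, hφV⟩ := extraction_of_frequently_atTop (not_eventually.1 hcon)
  have hgφ : Tendsto (g ∘ φ) atTop (𝓝 z) := hg.comp hφ.tendsto_atTop
  -- `V` misses the range of `g ∘ φ`, and `insert z (range (g ∘ φ))` is compact, hence closed,
  -- so the complement of the range is open although `g ∘ φ` converges to a point of it.
  have hclosed : IsClosed (insert z (range (g ∘ φ))) := hgφ.isCompact_insert_range.isClosed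
  have hopen : IsOpen (range (g ∘ φ))ᶜ := by
    refine hB.isOpen_iff.2 fun p hp => ?_
    by_cases hpz : p = z
    · subst hpz
      exact ⟨V, hV, fun q hq ⟨n, hn⟩ => hφV n (hn.symm ▸ hq : (g ∘ φ) n ∈ V)⟩
    · have hpK : p ∈ (insert z (range (g ∘ φ)))ᶜ := fun h => h.elim hpz hp
      obtain ⟨W, hW, hWK⟩ := hB.isOpen_iff.1 hclosed.isOpen_compl p hpK
      exact ⟨W, hW, hWK.trans (compl_subset_compl.2 (subset_insert _ _))⟩
  have hz : z ∈ (range (g ∘ φ))ᶜ := fun ⟨n, hn⟩ =>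
    hφV n (hn.symm ▸ hB.2.2.1 z V hV : (g ∘ φ) n ∈ V)
  obtain ⟨n, hn⟩ := (hgφ.eventually (hopen.mem_nhds hz)).exists
  exact hn ⟨n, rfl⟩

theorem hasBasis_biInf_principal (hB : IsWeakBase B) (z : Z) :
    (⨅ V ∈ B z, 𝓟 V).HasBasis (· ∈ B z) id :=
  Filter.hasBasis_biInf_principal
    (fun V₁ h₁ V₂ h₂ => (hB.2.1 z V₁ h₁ V₂ h₂).imp fun _ ⟨hW, hW'⟩ =>
      ⟨hW, subset_inter_iff.1 hW'⟩) (hB.1 z)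

theorem biInf_principal_le_nhds (hB : IsWeakBase B) (z : Z) : ⨅ V ∈ B z, 𝓟 V ≤ 𝓝 z := by
  intro s hs
  obtain ⟨O, hOs, hO, hzO⟩ := mem_nhds_iff.1 hs
  obtain ⟨V, hV, hVO⟩ := hB.isOpen_iff.1 hO z hzO
  exact (hB.hasBasis_biInf_principal z).mem_of_superset hV (hVO.trans hOs)

theorem exists_tendsto_of_forall_not_subset (hB : IsWeakBase B) {z : Z} (hc : (B z).Countable)
    {U : Set Z} (hU : ∀ V ∈ B z, ¬V ⊆ U) :
    ∃ g : ℕ → Z, (∀ n, g n ∉ U) ∧ Tendsto g atTop (𝓝 z) := by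
  have hbasis := hB.hasBasis_biInf_principal z
  have := HasCountableBasis.isCountablyGenerated ⟨hbasis, hc⟩
  obtain ⟨W, hWB, hW⟩ := hbasis.exists_antitone_subbasis
  choose g hgW hgU using fun n => not_subset.1 (hU (W n) (hWB n))
  exact ⟨g, hgU, (hW.tendsto hgW).mono_right (hB.biInf_principal_le_nhds z)⟩

theorem sequentialSpace (hB : IsWeakBase B) (hc : ∀ z, (B z).Countable) : SequentialSpace Z := by
  refine ⟨fun s hs => isOpen_compl_iff.1 (hB.isOpen_iff.2 fun z hz => ?_)⟩
  by_contra! hU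
  obtain ⟨g, hgs, hg⟩ := hB.exists_tendsto_of_forall_not_subset (hc z) hU
  exact hz (hs (fun n => not_not.1 (hgs n)) hg)

end IsWeakBase

/-- With `C z` a countable weak base of `τ z`, the family `z ↦ C z z` is a weak base: a set
absorbing it is sequentially open in each (sequential) `τ w`, because members of `C z z` are
sequential neighbourhoods of `z` for `τ z`, hence for `τ w`. -/
theorem WeaklyFirstCountable.of_nhds_le_nhds {Z : Type*} [t : TopologicalSpace Z]
    (τ : Z → TopologicalSpace Z) (hT2 : ∀ z, @T2Space Z (τ z))
    (hτ : ∀ z, @WeaklyFirstCountable Z (τ z))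
    (hle : ∀ w z, @nhds Z (τ w) z ≤ @nhds Z (τ z) z) (heq : ∀ z, @nhds Z (τ z) z = 𝓝 z) :
    WeaklyFirstCountable Z := by
  choose C hC hCc using hτ
  have hfiner : ∀ z, τ z ≤ t := fun z =>
    le_of_nhds_le_nhds fun w => (hle z w).trans (heq w).le
  refine ⟨fun z => C z z, ⟨fun z => (hC z).1 z, fun z => (hC z).2.1 z,
    fun z => (hC z).2.2.1 z, fun U => ⟨fun hU z hz => ?_, fun hU => ?_⟩⟩, fun z => hCc z z⟩
  · exact ((hC z).2.2.2 U).1 (hU.mono (hfiner z)) z hz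
  · have hopen : ∀ w, IsOpen[τ w] U := by
      intro w
      let := τ w
      have := (hC w).sequentialSpace (hCc w)
      refine isClosed_compl_iff.1 (IsSeqClosed.isClosed fun g z hgU hg => ?_)
      intro hz
      obtain ⟨V, hV, hVU⟩ := hU z hz
      obtain ⟨n, hn⟩ := (@IsWeakBase.eventually_mem_of_tendsto _ (τ z) _ (hT2 z) (hC z) _ _ hV
        g (hg.mono_right (hle w z))).exists
      exact hgU n (hVU hn)
    refine isOpen_iff_mem_nhds.2 fun z hz => ?_
    rw [← heq z]
    exact @IsOpen.mem_nhds _ (τ z) _ _ (hopen z) hz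

section Pinched

variable {Y : Type*} [MetricSpace Y]

open Classical in
/-- The metric `d'(a, b) = d(a, y₀) + d(b, y₀)` for `a ≠ b`: it isolates every point other
than `y₀` and keeps the balls around `y₀`. -/
noncomputable abbrev pinchedMetric (y₀ : Y) : MetricSpace Y where
  dist a b := if a = b then 0 else dist a y₀ + dist b y₀
  dist_self _ := if_pos rfl
  dist_comm a b := by simp only [eq_comm, add_comm]
  dist_triangle a b c := by split_ifs <;> grind [dist_nonneg]
  eq_of_dist_eq_zero {a b} h := by
    by_contra hab
    rw [if_neg hab] at h
    linarith [dist_pos.2 hab, dist_triangle_right a b y₀]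

noncomputable abbrev pinchedTopology (y₀ : Y) : TopologicalSpace Y :=
  (pinchedMetric y₀).toUniformSpace.toTopologicalSpace

theorem pinchedMetric_dist_of_ne (y₀ : Y) {a b : Y} (h : a ≠ b) :
    @dist Y (pinchedMetric y₀).toDist a b = dist a y₀ + dist b y₀ :=
  if_neg h

theorem ball_pinchedMetric_self (y₀ : Y) (ε : ℝ) :
    @Metric.ball Y (pinchedMetric y₀).toPseudoMetricSpace y₀ ε = Metric.ball y₀ ε := by
  ext y
  by_cases h : y = y₀
  · subst h
    simp only [Metric.mem_ball, dist_self, @dist_self Y (pinchedMetric y).toPseudoMetricSpace]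
  · simp only [Metric.mem_ball, pinchedMetric_dist_of_ne y₀ h, dist_self, add_zero]

theorem nhds_pinchedTopology_self (y₀ : Y) : @nhds Y (pinchedTopology y₀) y₀ = 𝓝 y₀ := by
  refine (@Metric.nhds_basis_ball Y (pinchedMetric y₀).toPseudoMetricSpace y₀).eq_of_same_basis ?_
  rw [funext (ball_pinchedMetric_self y₀)]
  exact Metric.nhds_basis_ball

theorem isOpen_pinchedTopology_singleton {y₀ y : Y} (hy : y ≠ y₀) :
    IsOpen[pinchedTopology y₀] {y} := by
  refine (@Metric.isOpen_singleton_iff Y (pinchedMetric y₀).toPseudoMetricSpace y).2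
    ⟨dist y y₀, dist_pos.2 hy, ?_⟩
  intro z hz
  by_contra hzy
  rw [pinchedMetric_dist_of_ne y₀ hzy] at hz
  linarith [dist_nonneg (x := z) (y := y₀)]

theorem nhds_pinchedTopology_le (y₀ y : Y) :
    @nhds Y (pinchedTopology y₀) y ≤ @nhds Y (pinchedTopology y) y := by
  rcases eq_or_ne y y₀ with rfl | hy
  · exact le_rfl
  · rw [(@isOpen_singleton_iff_nhds_eq_pure Y (pinchedTopology y₀) y).1
      (isOpen_pinchedTopology_singleton hy)]
    exact @pure_le_nhds Y (pinchedTopology y) y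

end Pinched

theorem weaklyFirstCountable_prod_of_pinched {X Y : Type*} [TopologicalSpace X] [T2Space X]
    [MetricSpace Y]
    (h : ∀ y₀ : Y,
      @WeaklyFirstCountable (X × Y) (@instTopologicalSpaceProd X Y _ (pinchedTopology y₀))) :
    WeaklyFirstCountable (X × Y) := by
  refine WeaklyFirstCountable.of_nhds_le_nhds
    (fun q => @instTopologicalSpaceProd X Y _ (pinchedTopology q.2))
    (fun q => ?_) (fun q => h q.2) (fun p q => ?_) (fun q => ?_)
  · let := pinchedMetric q.2
    exact inferInstance
  · rw [@nhds_prod_eq X Y _ (pinchedTopology p.2), @nhds_prod_eq X Y _ (pinchedTopology q.2)]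
    exact Filter.prod_mono le_rfl (nhds_pinchedTopology_le p.2 q.2)
  · rw [@nhds_prod_eq X Y _ (pinchedTopology q.2), nhds_pinchedTopology_self, nhds_prod_eq]

/-- For a Hausdorff space `X`, the product `X × Y` is weakly first countable for
every metrizable `Y` iff it is for every prime metrizable `Y` (metrizable with at
most one non-isolated point). -/
theorem stmt16 {X : Type u} [TopologicalSpace X] [T2Space X] :
    (∀ (Y : Type u) [TopologicalSpace Y], TopologicalSpace.MetrizableSpace Y →
        WeaklyFirstCountable (X × Y)) ↔
    (∀ (Y : Type u) [TopologicalSpace Y], TopologicalSpace.MetrizableSpace Y →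
        ({y : Y | ¬IsOpen ({y} : Set Y)}).Subsingleton →
        WeaklyFirstCountable (X × Y)) := by
  refine ⟨fun h Y _ hY _ => h Y hY, fun h Y _ hY => ?_⟩
  obtain ⟨m, rfl⟩ : ∃ m : MetricSpace Y, m.toUniformSpace.toTopologicalSpace = ‹_› :=
    ⟨TopologicalSpace.metrizableSpaceMetric Y, rfl⟩
  refine weaklyFirstCountable_prod_of_pinched fun y₀ => @h Y (pinchedTopology y₀) ?_ ?_
  · let := pinchedMetric y₀
    exact inferInstance
  · exact subsingleton_singleton.anti fun y hy =>
      of_not_not fun hne => hy (isOpen_pinchedTopology_singleton hne)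
end

section
/- Let X be a Hausdorff topological space. Then X × Y is symmetrizable for every metrizable topological space Y if and only if X × Y is symmetrizable for every metrizable topological space Y with at most one non-isolated point. -/
open Filter Topology

universe u

/-!
Taking `Y` a point shows that `X` carries a symmetric `d`; for a metric space `Y` the candidate
symmetric on `X × Y` is `d x x' + dist y y'`. Every open set contains its balls. Conversely, let
`U` contain such a ball around each of its points, and fix `y`. Remetrize `Y` so that all points
but `y` become isolated; the product of `X` with this prime metrizable space is symmetrizable,
hence sequential, and `U` is open in it: along a convergent sequence `d` is frequently small
because `X` is Hausdorff, and `dist` is eventually small. As `y` keeps its neighbourhoods, `U` is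
a neighbourhood of each `(x, y) ∈ U` in `X × Y`.
-/

variable {X Y Z : Type*}

def SymmetrizesTopology [TopologicalSpace X] (d : X → X → ℝ) : Prop :=
  ∀ U : Set X, IsOpen U ↔ ∀ x ∈ U, ∃ ε > 0, {y | d x y < ε} ⊆ U

lemma IsSemiMetric.comp_injective {d : Z → Z → ℝ} (hd : IsSemiMetric d) {f : X → Z}
    (hf : f.Injective) : IsSemiMetric fun a b => d (f a) (f b) :=
  ⟨fun _ _ => hd.1 _ _, fun _ _ => hd.2.1 _ _, fun _ _ => (hd.2.2 _ _).trans hf.eq_iff⟩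

lemma IsSemiMetric.prod_add {d₁ : X → X → ℝ} {d₂ : Y → Y → ℝ} (h₁ : IsSemiMetric d₁)
    (h₂ : IsSemiMetric d₂) : IsSemiMetric fun p q : X × Y => d₁ p.1 q.1 + d₂ p.2 q.2 := by
  refine ⟨fun p q => add_nonneg (h₁.1 _ _) (h₂.1 _ _),
    fun p q => by simp only [h₁.2.1 p.1, h₂.2.1 p.2], fun p q => ?_⟩
  rw [add_eq_zero_iff_of_nonneg (h₁.1 _ _) (h₂.1 _ _), h₁.2.2, h₂.2.2, Prod.ext_iff]

lemma isSemiMetric_dist [MetricSpace Y] : IsSemiMetric (dist : Y → Y → ℝ) :=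
  ⟨fun _ _ => dist_nonneg, dist_comm, fun _ _ => dist_eq_zero⟩

lemma symmetrizesTopology_dist [PseudoMetricSpace Y] :
    SymmetrizesTopology (dist : Y → Y → ℝ) := fun _ => by
  simp only [Metric.isOpen_iff, Metric.ball, dist_comm]

namespace SymmetrizesTopology

variable [TopologicalSpace X] {d : X → X → ℝ}

lemma comp_homeomorph [TopologicalSpace Z] {d : Z → Z → ℝ} (hd : SymmetrizesTopology d)
    (f : X ≃ₜ Z) : SymmetrizesTopology fun a b => d (f a) (f b) := by
  intro U
  rw [← f.isOpen_image, hd]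
  constructor
  · intro h x hx
    obtain ⟨ε, hε, hball⟩ := h (f x) (Set.mem_image_of_mem f hx)
    exact ⟨ε, hε, fun y hy => f.injective.mem_set_image.1 (hball hy)⟩
  · rintro h _ ⟨x, hx, rfl⟩
    obtain ⟨ε, hε, hball⟩ := h x hx
    refine ⟨ε, hε, fun z hz => ⟨f.symm z, hball ?_, f.apply_symm_apply z⟩⟩
    simpa only [Set.mem_ofPred_eq, f.apply_symm_apply] using hz

lemma isClosed_iff (hd : SymmetrizesTopology d) {A : Set X} :
    IsClosed A ↔ ∀ z, (∀ ε > 0, ∃ a ∈ A, d z a < ε) → z ∈ A := by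
  rw [← isOpen_compl_iff, hd]
  refine forall_congr' fun z => ?_
  simp only [Set.subset_def, Set.mem_compl_iff, Set.mem_ofPred_eq]
  grind

lemma tendsto_of_eventually_lt (hd : SymmetrizesTopology d) {f : ℕ → X} {z : X}
    (h : ∀ ε > 0, ∀ᶠ n in atTop, d z (f n) < ε) : Tendsto f atTop (𝓝 z) := by
  rw [(nhds_basis_opens z).tendsto_right_iff]
  rintro V ⟨hzV, hV⟩
  obtain ⟨ε, hε, hball⟩ := (hd V).1 hV z hzV
  exact (h ε hε).mono fun n hn => hball hn

lemma exists_seq_tendsto (hd : SymmetrizesTopology d) {A : Set X} {z : X}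
    (hz : ∀ ε > 0, ∃ a ∈ A, d z a < ε) :
    ∃ a : ℕ → X, (∀ n, a n ∈ A) ∧ Tendsto a atTop (𝓝 z) := by
  choose a haA hza using fun n : ℕ => hz (1 / (n + 1)) Nat.one_div_pos_of_nat
  refine ⟨a, haA, hd.tendsto_of_eventually_lt fun ε hε => ?_⟩
  filter_upwards [tendsto_one_div_add_atTop_nhds_zero_nat.eventually (gt_mem_nhds hε)]
    with n hn using (hza n).trans hn

lemma sequentialSpace (hd : SymmetrizesTopology d) : SequentialSpace X := by
  refine ⟨fun A hA => hd.isClosed_iff.2 fun z hz => ?_⟩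
  obtain ⟨a, haA, ha⟩ := hd.exists_seq_tendsto hz
  exact hA haA ha

lemma frequently_lt [T2Space X] (hd : SymmetrizesTopology d) (hsm : IsSemiMetric d)
    {u : ℕ → X} {x : X} (hu : Tendsto u atTop (𝓝 x)) {ε : ℝ} (hε : 0 < ε) :
    ∃ᶠ n in atTop, d x (u n) < ε := by
  refine Filter.frequently_atTop.2 fun K => ?_
  by_contra! hfar
  set v : ℕ → X := fun n => u (n + K)
  have hv : Tendsto v atTop (𝓝 x) := hu.comp (tendsto_add_atTop_nat K)
  have hvfar (n : ℕ) : ε ≤ d x (v n) := hfar _ (Nat.le_add_left K n)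
  have hx : x ∉ Set.range v := by
    rintro ⟨n, hn⟩
    exact (hvfar n).not_gt (by rwa [hn, (hsm.2.2 x x).2 rfl])
  have hnotClosed : ¬IsClosed (Set.range v) := fun h =>
    hx (h.mem_of_tendsto hv (.of_forall Set.mem_range_self))
  obtain ⟨z, hzapprox, hz⟩ : ∃ z, (∀ ε > 0, ∃ a ∈ Set.range v, d z a < ε) ∧ z ∉ Set.range v := by
    simpa only [hd.isClosed_iff, not_forall, exists_prop] using hnotClosed
  obtain ⟨a, ha, haz⟩ := hd.exists_seq_tendsto hzapprox
  -- `insert x (range v)` is compact, hence closed as `X` is Hausdorff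
  obtain rfl : z = x := (hv.isCompact_insert_range.isClosed.mem_of_tendsto haz
    (.of_forall fun n => Or.inr (ha n))).resolve_right hz
  obtain ⟨_, ⟨n, rfl⟩, hn⟩ := hzapprox ε hε
  exact (hvfar n).not_gt hn

end SymmetrizesTopology

/-- `Y` remetrized by `d'(a, b) = d(a, y) + d(y, b)` for `a ≠ b`: every point other than `y`
becomes isolated, while `y` keeps its neighbourhoods. -/
def PrimeAt {Y : Type*} (_y : Y) : Type _ := Y

namespace PrimeAt

variable [MetricSpace Y] {y : Y}

def toPrimeAt (y : Y) : Y ≃ PrimeAt y := Equiv.refl Y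

open Classical in
noncomputable instance : MetricSpace (PrimeAt y) where
  dist a b := if a = b then 0 else dist ((toPrimeAt y).symm a) y + dist y ((toPrimeAt y).symm b)
  dist_self a := if_pos rfl
  dist_comm a b := by
    by_cases h : a = b
    · rw [h]
    · simp only [if_neg h, if_neg (Ne.symm h), dist_comm y, add_comm]
  dist_triangle a b c := by
    have hb := add_nonneg (dist_nonneg (x := (toPrimeAt y).symm b) (y := y))
      (dist_nonneg (x := y) (y := (toPrimeAt y).symm b))
    split_ifs <;> subst_vars <;> first | contradiction | linarith [hb] | positivity
  eq_of_dist_eq_zero {a b} h := by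
    by_contra hab
    rw [if_neg hab, add_eq_zero_iff_of_nonneg dist_nonneg dist_nonneg, dist_eq_zero,
      dist_eq_zero] at h
    exact hab ((toPrimeAt y).symm.injective (h.1.trans h.2))

lemma dist_eq_of_ne {a b : PrimeAt y} (h : a ≠ b) :
    dist a b = dist ((toPrimeAt y).symm a) y + dist y ((toPrimeAt y).symm b) :=
  if_neg h

lemma dist_toPrimeAt_self (b : Y) : dist (toPrimeAt y b) (toPrimeAt y y) = dist b y := by
  by_cases h : b = y
  · rw [h, dist_self, dist_self]
  · rw [dist_eq_of_ne ((toPrimeAt y).injective.ne h)]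
    exact add_eq_left.2 (dist_self y)

lemma continuousAt_toPrimeAt : ContinuousAt (toPrimeAt y) y :=
  Metric.continuousAt_iff.2 fun ε hε => ⟨ε, hε, fun _ h => (dist_toPrimeAt_self _).trans_lt h⟩

lemma continuous_symm_toPrimeAt : Continuous (toPrimeAt y).symm := by
  refine (LipschitzWith.of_dist_le_mul (K := 1) fun a b => ?_).continuous
  by_cases h : a = b
  · rw [h, dist_self, dist_self, mul_zero]
  · rw [dist_eq_of_ne h, NNReal.coe_one, one_mul]
    exact dist_triangle _ _ _

lemma isOpen_singleton {b : PrimeAt y} (hb : b ≠ toPrimeAt y y) : IsOpen {b} := by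
  refine Metric.isOpen_singleton_iff.2
    ⟨dist ((toPrimeAt y).symm b) y, dist_pos.2 hb, fun c hc => ?_⟩
  by_contra hcb
  rw [dist_eq_of_ne hcb, dist_comm y] at hc
  linarith [dist_nonneg (x := (toPrimeAt y).symm c) (y := y)]

lemma subsingleton_setOf_not_isOpen_singleton :
    {b : PrimeAt y | ¬IsOpen ({b} : Set (PrimeAt y))}.Subsingleton :=
  Set.subsingleton_of_subset_singleton (a := toPrimeAt y y) fun _ hb =>
    not_imp_comm.1 isOpen_singleton hb

end PrimeAt

lemma Symmetrizable.of_homeomorph [TopologicalSpace X] [TopologicalSpace Z]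
    (h : Symmetrizable Z) (f : X ≃ₜ Z) : Symmetrizable X :=
  let ⟨_, hsm, hd⟩ := h
  ⟨_, hsm.comp_injective f.injective, SymmetrizesTopology.comp_homeomorph hd f⟩

lemma Symmetrizable.sequentialSpace [TopologicalSpace X] (h : Symmetrizable X) :
    SequentialSpace X :=
  let ⟨_, _, hd⟩ := h
  SymmetrizesTopology.sequentialSpace hd

namespace SymmetrizesTopology

open PrimeAt

variable [TopologicalSpace X] {d : X → X → ℝ}

lemma exists_ball_add_subset_of_isOpen [TopologicalSpace Y] {d' : Y → Y → ℝ}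
    (hd : SymmetrizesTopology d) (hd' : SymmetrizesTopology d') (h0 : ∀ a b, 0 ≤ d a b)
    (h0' : ∀ a b, 0 ≤ d' a b) {U : Set (X × Y)} (hU : IsOpen U) {p : X × Y} (hp : p ∈ U) :
    ∃ ε > 0, {q | d p.1 q.1 + d' p.2 q.2 < ε} ⊆ U := by
  obtain ⟨V, W, hV, hW, hpV, hpW, hVW⟩ := isOpen_prod_iff.1 hU p.1 p.2 hp
  obtain ⟨ε, hε, hVball⟩ := (hd V).1 hV _ hpV
  obtain ⟨ε', hε', hWball⟩ := (hd' W).1 hW _ hpW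
  refine ⟨min ε ε', lt_min hε hε', fun q hq => hVW ⟨hVball ?_, hWball ?_⟩⟩
  all_goals
    simp only [Set.mem_ofPred_eq, lt_min_iff] at hq ⊢
    linarith [h0 p.1 q.1, h0' p.2 q.2]

lemma isOpen_of_forall_exists_ball_add_dist [MetricSpace Y] [T2Space X]
    (hd : SymmetrizesTopology d) (hsm : IsSemiMetric d)
    (hseq : ∀ y : Y, SequentialSpace (X × PrimeAt y)) {U : Set (X × Y)}
    (hU : ∀ p ∈ U, ∃ ε > 0, {q | d p.1 q.1 + dist p.2 q.2 < ε} ⊆ U) : IsOpen U := by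
  rw [isOpen_iff_mem_nhds]
  rintro ⟨x, y⟩ hxy
  set e : X × PrimeAt y → X × Y := Prod.map id (toPrimeAt y).symm
  have hopen : IsOpen (e ⁻¹' U) := by
    refine isClosed_compl_iff.1 (IsSeqClosed.isClosed fun q p hq hqp => fun hp => ?_)
    obtain ⟨ε, hε, hball⟩ := hU (e p) hp
    have hfst : ∃ᶠ n in atTop, d (e p).1 (e (q n)).1 < ε / 2 :=
      hd.frequently_lt hsm ((continuous_fst.tendsto p).comp hqp) (half_pos hε)
    have hsnd : ∀ᶠ n in atTop, dist (e p).2 (e (q n)).2 < ε / 2 := by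
      have := (continuous_symm_toPrimeAt.tendsto _).comp ((continuous_snd.tendsto p).comp hqp)
      exact (Metric.tendsto_nhds.1 this _ (half_pos hε)).mono fun n hn => by rwa [dist_comm]
    obtain ⟨n, hn, hn'⟩ := (hfst.and_eventually hsnd).exists
    have hnear : d (e p).1 (e (q n)).1 + dist (e p).2 (e (q n)).2 < ε := by linarith
    exact hq n (hball hnear)
  exact (continuousAt_id.prodMap continuousAt_toPrimeAt).preimage_mem_nhds (hopen.mem_nhds hxy)

lemma prod_dist [MetricSpace Y] [T2Space X] (hd : SymmetrizesTopology d) (hsm : IsSemiMetric d)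
    (hseq : ∀ y : Y, SequentialSpace (X × PrimeAt y)) :
    SymmetrizesTopology fun p q : X × Y => d p.1 q.1 + dist p.2 q.2 := fun _ =>
  ⟨fun hU _ hp => hd.exists_ball_add_subset_of_isOpen symmetrizesTopology_dist hsm.1
    (fun _ _ => dist_nonneg) hU hp, hd.isOpen_of_forall_exists_ball_add_dist hsm hseq⟩

end SymmetrizesTopology

/-- For a Hausdorff space `X`, the product `X × Y` is symmetrizable for every
metrizable `Y` iff it is for every prime metrizable `Y` (metrizable with at most
one non-isolated point). -/
theorem stmt17 {X : Type u} [TopologicalSpace X] [T2Space X] :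
    (∀ (Y : Type u) [TopologicalSpace Y], TopologicalSpace.MetrizableSpace Y →
        Symmetrizable (X × Y)) ↔
    (∀ (Y : Type u) [TopologicalSpace Y], TopologicalSpace.MetrizableSpace Y →
        ({y : Y | ¬IsOpen ({y} : Set Y)}).Subsingleton →
        Symmetrizable (X × Y)) := by
  refine ⟨fun h Y _ hY _ => h Y hY, fun hp Y tY hY => ?_⟩
  obtain ⟨m, rfl⟩ : ∃ m : MetricSpace Y, m.toUniformSpace.toTopologicalSpace = tY :=
    ⟨TopologicalSpace.metrizableSpaceMetric Y, rfl⟩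
  obtain ⟨d, hsm, hd⟩ := (hp PUnit.{u + 1} inferInstance
    Set.subsingleton_of_subsingleton).of_homeomorph (Homeomorph.prodPUnit X).symm
  have hseq (y : Y) : SequentialSpace (X × PrimeAt y) :=
    (hp (PrimeAt y) inferInstance PrimeAt.subsingleton_setOf_not_isOpen_singleton).sequentialSpace
  exact ⟨_, hsm.prod_add isSemiMetric_dist, SymmetrizesTopology.prod_dist hd hsm hseq⟩
end

section
/- Let X be a regular Hausdorff symmetrizable topological space in which every point has a countably compact neighborhood. Then X × Y is symmetrizable for every symmetrizable topological space Y. -/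
/-! The product is symmetrized by `max dX dY`. Every open set of `X × Y` is open for the balls
of this semi-metric; conversely, if `U` is, and `(x₀, y₀) ∈ U`, choose a closed countably compact
neighbourhood `C` of `x₀` with `C × {y₀} ⊆ U`. The tube `{y | C × {y} ⊆ U}` is open in `Y`: if it
were not, we would get `xₙ ∈ C` and `yₙ → y` with `(xₙ, yₙ) ∉ U`, while the points `xₙ` come
`dX`-arbitrarily close to some `q ∈ C` infinitely often, so that `(xₙ, yₙ)` would eventually lie
in a `max dX dY`-ball around `(q, y) ∈ U` contained in `U`.

That `q` exists because otherwise every tail `{xₙ | n ≥ m}` would be closed, and a topological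
cluster point of `(xₙ)` in `C` would have to be equal to `xₙ` for arbitrarily large `n`. -/

open Filter Topology

universe u

section SemiMetricTopology

variable {Z : Type*}

def IsBallOpen (d : Z → Z → ℝ) (U : Set Z) : Prop :=
  ∀ x ∈ U, ∃ ε > 0, {y | d x y < ε} ⊆ U

def IsSymmetrizedBy [TopologicalSpace Z] (d : Z → Z → ℝ) : Prop :=
  ∀ U : Set Z, IsOpen U ↔ IsBallOpen d U

theorem exists_lt_forall_le_of_forall_ge {α : Type*} [LinearOrder α] {f : ℕ → α} {a ε : α}
    (hpos : ∀ n, a < f n) (hε : a < ε) {N : ℕ} (hN : ∀ n ≥ N, ε ≤ f n) :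
    ∃ δ > a, ∀ n, δ ≤ f n := by
  induction N generalizing ε with
  | zero => exact ⟨ε, hε, fun n => hN n n.zero_le⟩
  | succ N ih =>
    refine ih (lt_min hε (hpos N)) fun n hn => ?_
    rcases hn.eq_or_lt with rfl | hlt
    · exact min_le_right _ _
    · exact (min_le_left _ _).trans (hN n hlt)

variable [TopologicalSpace Z] {d : Z → Z → ℝ}

theorem IsSymmetrizedBy.isClosed_iff (hdt : IsSymmetrizedBy d) {A : Set Z} :
    IsClosed A ↔ ∀ y ∉ A, ∃ ε > 0, ∀ a ∈ A, ε ≤ d y a := by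
  rw [← isOpen_compl_iff, hdt]
  refine forall₂_congr fun y _ => exists_congr fun ε => and_congr_right fun _ => ?_
  simp only [Set.subset_def, Set.mem_ofPred_eq, Set.mem_compl_iff]
  exact ⟨fun h a ha => not_lt.1 fun hlt => h a hlt ha, fun h a hlt ha => (h a ha).not_gt hlt⟩

theorem IsSymmetrizedBy.isClosed_image_Ici (hdt : IsSymmetrizedBy d) (hd : IsSemiMetric d)
    {C : Set Z} (hC : IsClosed C) {u : ℕ → Z} (hu : ∀ n, u n ∈ C)
    (hsep : ∀ q ∈ C, ∃ ε > 0, ∀ᶠ n in atTop, ε ≤ d q (u n)) (m : ℕ) :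
    IsClosed (u '' Set.Ici m) := by
  rw [hdt.isClosed_iff]
  intro y hy
  by_cases hyC : y ∈ C
  · obtain ⟨ε, hε, hev⟩ := hsep y hyC
    obtain ⟨N, hN⟩ := eventually_atTop.1 hev
    have hpos : ∀ n, 0 < d y (u (n + m)) := fun n =>
      (hd.1 _ _).lt_of_ne' fun h0 => hy ⟨n + m, by simp, ((hd.2.2 _ _).1 h0).symm⟩
    obtain ⟨δ, hδ, hδle⟩ :=
      exists_lt_forall_le_of_forall_ge hpos hε (N := N) fun n _ => hN _ (by omega)
    refine ⟨δ, hδ, ?_⟩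
    rintro _ ⟨n, hn, rfl⟩
    simpa [Nat.sub_add_cancel (Set.mem_Ici.1 hn)] using hδle (n - m)
  · obtain ⟨ε, hε, hεle⟩ := hdt.isClosed_iff.1 hC y hyC
    exact ⟨ε, hε, by rintro _ ⟨n, -, rfl⟩; exact hεle _ (hu n)⟩

theorem IsSymmetrizedBy.exists_frequently_lt (hdt : IsSymmetrizedBy d) (hd : IsSemiMetric d)
    {C : Set Z} (hC : IsClosed C) (hcc : IsCountablyCompact C) {u : ℕ → Z}
    (hu : ∀ n, u n ∈ C) : ∃ q ∈ C, ∀ ε > 0, ∃ᶠ n in atTop, d q (u n) < ε := by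
  by_contra! hsep
  obtain ⟨q, hqC, hq⟩ := hcc.seq_clusterPt u (Eventually.of_forall hu)
  obtain ⟨ε, hε, hev⟩ := hsep q hqC
  obtain ⟨N, hN⟩ := eventually_atTop.1 hev
  have hq_tail : q ∈ u '' Set.Ici N := by
    rw [← (hdt.isClosed_image_Ici hd hC hu hsep N).closure_eq]
    exact mapClusterPt_atTop_iff_forall_mem_closure.1 hq N
  obtain ⟨n, hn, rfl⟩ := hq_tail
  have := hN n hn
  rw [(hd.2.2 _ _).2 rfl] at this
  linarith

end SemiMetricTopology

section Product

variable {X Y : Type*} {dX : X → X → ℝ} {dY : Y → Y → ℝ}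

def maxDist (dX : X → X → ℝ) (dY : Y → Y → ℝ) (p q : X × Y) : ℝ :=
  max (dX p.1 q.1) (dY p.2 q.2)

theorem maxDist_lt_iff {p q : X × Y} {ε : ℝ} :
    maxDist dX dY p q < ε ↔ dX p.1 q.1 < ε ∧ dY p.2 q.2 < ε :=
  max_lt_iff

theorem IsSemiMetric.maxDist (hX : IsSemiMetric dX) (hY : IsSemiMetric dY) :
    IsSemiMetric (maxDist dX dY) := by
  refine ⟨fun p q => le_max_of_le_left (hX.1 _ _), fun p q => by
    simp only [_root_.maxDist, hX.2.1 p.1, hY.2.1 p.2], fun p q => ?_⟩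
  simp only [_root_.maxDist, Prod.ext_iff, ← hX.2.2, ← hY.2.2]
  constructor
  · intro h0
    exact ⟨le_antisymm (h0 ▸ le_max_left _ _) (hX.1 _ _),
      le_antisymm (h0 ▸ le_max_right _ _) (hY.1 _ _)⟩
  · rintro ⟨h1, h2⟩
    simp [h1, h2]

theorem isBallOpen_slice {U : Set (X × Y)} (hU : IsBallOpen (maxDist dX dY) U)
    (hY : IsSemiMetric dY) (y : Y) : IsBallOpen dX {x | (x, y) ∈ U} := by
  intro x hx
  obtain ⟨ε, hε, hball⟩ := hU (x, y) hx
  refine ⟨ε, hε, fun x' hx' => hball (maxDist_lt_iff.2 ⟨hx', ?_⟩)⟩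
  simpa [(hY.2.2 y y).2 rfl] using hε

variable [TopologicalSpace X] [TopologicalSpace Y]

theorem IsSymmetrizedBy.isBallOpen_maxDist (hX : IsSymmetrizedBy dX) (hY : IsSymmetrizedBy dY)
    {U : Set (X × Y)} (hU : IsOpen U) : IsBallOpen (maxDist dX dY) U := by
  intro p hp
  obtain ⟨V, W, hV, hW, hxV, hyW, hVW⟩ := isOpen_prod_iff.1 hU p.1 p.2 hp
  obtain ⟨ε₁, hε₁, hb₁⟩ := (hX V).1 hV p.1 hxV
  obtain ⟨ε₂, hε₂, hb₂⟩ := (hY W).1 hW p.2 hyW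
  refine ⟨min ε₁ ε₂, lt_min hε₁ hε₂, fun q hq => ?_⟩
  obtain ⟨hq₁, hq₂⟩ := maxDist_lt_iff.1 hq
  exact hVW ⟨hb₁ (hq₁.trans_le (min_le_left _ _)), hb₂ (hq₂.trans_le (min_le_right _ _))⟩

theorem isOpen_setOf_forall_prodMk_mem (hX : IsSymmetrizedBy dX) (hdX : IsSemiMetric dX)
    (hY : IsSymmetrizedBy dY) {C : Set X} (hC : IsClosed C) (hcc : IsCountablyCompact C)
    {U : Set (X × Y)} (hU : IsBallOpen (maxDist dX dY) U) :
    IsOpen {y | ∀ x ∈ C, (x, y) ∈ U} := by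
  refine (hY _).2 fun y hy => ?_
  by_contra! hnot
  have hsel : ∀ n : ℕ, ∃ x ∈ C, ∃ y', dY y y' < 1 / ((n : ℝ) + 1) ∧ (x, y') ∉ U := by
    intro n
    obtain ⟨y', hy', hy'W⟩ := Set.not_subset.1 (hnot _ Nat.one_div_pos_of_nat)
    simp only [Set.mem_ofPred_eq, not_forall] at hy'W
    obtain ⟨x, hxC, hxU⟩ := hy'W
    exact ⟨x, hxC, y', hy', hxU⟩
  choose xs hxsC ys hys hnU using hsel
  obtain ⟨q, hqC, hq⟩ := hX.exists_frequently_lt hdX hC hcc hxsC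
  obtain ⟨η, hη, hball⟩ := hU (q, y) (hy q hqC)
  have hys_near : ∀ᶠ n in atTop, dY y (ys n) < η :=
    (tendsto_one_div_add_atTop_nhds_zero_nat.eventually (gt_mem_nhds hη)).mono
      fun n hn => (hys n).trans hn
  obtain ⟨n, hxn, hyn⟩ := ((hq η hη).and_eventually hys_near).exists
  exact hnU n (hball (maxDist_lt_iff.2 ⟨hxn, hyn⟩))

theorem IsBallOpen.isOpen_of_maxDist [RegularSpace X] (hX : IsSymmetrizedBy dX)
    (hdX : IsSemiMetric dX) (hY : IsSymmetrizedBy dY) (hdY : IsSemiMetric dY)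
    (hK : ∀ x : X, ∃ K ∈ 𝓝 x, IsCountablyCompact K) {U : Set (X × Y)}
    (hU : IsBallOpen (maxDist dX dY) U) : IsOpen U := by
  rw [isOpen_iff_mem_nhds]
  rintro ⟨x₀, y₀⟩ hp
  have hslice : IsOpen {x | (x, y₀) ∈ U} := (hX _).2 (isBallOpen_slice hU hdY y₀)
  obtain ⟨K, hKx, hKcc⟩ := hK x₀
  obtain ⟨C, hCn, hCcl, hCsub⟩ :=
    exists_mem_nhds_isClosed_subset (inter_mem (hslice.mem_nhds hp) hKx)
  have hCcc := hKcc.of_isClosed_subset hCcl fun x hx => (hCsub hx).2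
  have htube := isOpen_setOf_forall_prodMk_mem hX hdX hY hCcl hCcc hU
  refine mem_of_superset (prod_mem_nhds hCn (htube.mem_nhds fun x hx => (hCsub hx).1)) ?_
  rintro ⟨x, y⟩ ⟨hx, hy⟩
  exact hy x hx

end Product

theorem stmt18_general {X : Type u} [TopologicalSpace X] [RegularSpace X]
    (hs : Symmetrizable X) (h : ∀ x : X, ∃ K ∈ nhds x, CountablyCompactSet K) :
    ∀ (Y : Type u) [TopologicalSpace Y], Symmetrizable Y →
      Symmetrizable (X × Y) := by
  obtain ⟨dX, hdX, hX⟩ := hs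
  have hK : ∀ x : X, ∃ K ∈ 𝓝 x, IsCountablyCompact K := fun x =>
    (h x).imp fun _ ⟨hKx, hKcc⟩ => ⟨hKx, isCountablyCompact_iff_countable_open_cover.2 hKcc⟩
  rintro Y _ ⟨dY, hdY, hY⟩
  exact ⟨maxDist dX dY, hdX.maxDist hdY, fun U =>
    ⟨IsSymmetrizedBy.isBallOpen_maxDist hX hY, IsBallOpen.isOpen_of_maxDist hX hdX hY hdY hK⟩⟩

/-- A regular Hausdorff symmetrizable space in which every point has a countably
compact neighborhood has symmetrizable product with every symmetrizable space. -/
theorem stmt18 {X : Type u} [TopologicalSpace X] [T2Space X] [RegularSpace X]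
    (hs : Symmetrizable X) (h : ∀ x : X, ∃ K ∈ nhds x, CountablyCompactSet K) :
    ∀ (Y : Type u) [TopologicalSpace Y], Symmetrizable Y →
      Symmetrizable (X × Y) :=
  stmt18_general hs h
end
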